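/- arXiv:2201.01502 — 12 statements merged into one kernel-verified Lean document; each statement's English description precedes it below -/
import Mathlib

section
/- For every integer A, every ℓ > 0, every ℓ₃ ∈ (0,2π) and every real k, the functions a and b of the Floquet spectral condition satisfy the identity a(k)² + b(k)² = 128·sin²(kπ)·(4k²ℓ² + (k²ℓ²+1)² + (k²ℓ²−1)²·cos(2k(π−ℓ₃))); in particular a(k)² + b(k)² > 0 whenever k > 0 and k is not an integer. -/
open Real

/-- The function `a` of the Floquet spectral condition of the periodic magnetic
ring chain with vertex coupling parameter `ℓ`, connecting-link length `ℓ₁`,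
ring-arc lengths `2π - ℓ₃` and `ℓ₃`, and magnetic potential `A`. -/
noncomputable def chainA (ℓ ℓ₃ A k : ℝ) : ℝ :=
  8 * ((k * ℓ + 1) ^ 2 * Real.sin ((A + k) * π) * Real.cos ((A - k) * (π - ℓ₃))
    - (k * ℓ - 1) ^ 2 * Real.sin ((A - k) * π) * Real.cos ((A + k) * (π - ℓ₃)))

/-- The function `b` of the Floquet spectral condition. -/
noncomputable def chainB (ℓ ℓ₃ A k : ℝ) : ℝ :=
  8 * ((k * ℓ - 1) ^ 2 * Real.sin ((A - k) * π) * Real.sin ((A + k) * (π - ℓ₃))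
    - (k * ℓ + 1) ^ 2 * Real.sin ((A + k) * π) * Real.sin ((A - k) * (π - ℓ₃)))

theorem stmt_0 (A : ℝ) (hA : ∃ m : ℤ, A = m) (ℓ : ℝ) (hℓ : 0 < ℓ)
    (ℓ₃ : ℝ) (hℓ₃ : ℓ₃ ∈ Set.Ioo 0 (2 * π)) (k : ℝ) :
    (chainA ℓ ℓ₃ A k) ^ 2 + (chainB ℓ ℓ₃ A k) ^ 2
      = 128 * Real.sin (k * π) ^ 2 *
        (4 * k ^ 2 * ℓ ^ 2 + (k ^ 2 * ℓ ^ 2 + 1) ^ 2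
          + (k ^ 2 * ℓ ^ 2 - 1) ^ 2 * Real.cos (2 * k * (π - ℓ₃)))
    ∧ (0 < k → (¬∃ n : ℤ, k = n) →
        0 < (chainA ℓ ℓ₃ A k) ^ 2 + (chainB ℓ ℓ₃ A k) ^ 2) := by
  obtain ⟨m, rfl⟩ := hA
  have h1 : Real.sin (((m : ℝ) + k) * π) = Real.cos (m * π) * Real.sin (k * π) := by
    rw [show ((m : ℝ) + k) * π = (m : ℝ) * π + k * π by ring, Real.sin_add,
      Real.sin_int_mul_pi]
    ring
  have h2 : Real.sin (((m : ℝ) - k) * π) = -(Real.cos (m * π) * Real.sin (k * π)) := by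
    rw [show ((m : ℝ) - k) * π = (m : ℝ) * π - k * π by ring, Real.sin_sub,
      Real.sin_int_mul_pi]
    ring
  have hc : Real.cos ((m : ℝ) * π) ^ 2 = 1 := by
    have := Real.sin_sq_add_cos_sq ((m : ℝ) * π)
    rw [Real.sin_int_mul_pi] at this
    linarith
  have hkey : Real.cos (2 * k * (π - ℓ₃))
      = Real.cos (((m : ℝ) + k) * (π - ℓ₃)) * Real.cos (((m : ℝ) - k) * (π - ℓ₃))
        + Real.sin (((m : ℝ) + k) * (π - ℓ₃)) * Real.sin (((m : ℝ) - k) * (π - ℓ₃)) := by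
    rw [← Real.cos_sub]
    ring_nf
  have hP : Real.sin (((m : ℝ) + k) * (π - ℓ₃)) ^ 2
      + Real.cos (((m : ℝ) + k) * (π - ℓ₃)) ^ 2 = 1 := Real.sin_sq_add_cos_sq _
  have hQ : Real.sin (((m : ℝ) - k) * (π - ℓ₃)) ^ 2
      + Real.cos (((m : ℝ) - k) * (π - ℓ₃)) ^ 2 = 1 := Real.sin_sq_add_cos_sq _
  have main : (chainA ℓ ℓ₃ (m : ℝ) k) ^ 2 + (chainB ℓ ℓ₃ (m : ℝ) k) ^ 2
      = 128 * Real.sin (k * π) ^ 2 *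
        (4 * k ^ 2 * ℓ ^ 2 + (k ^ 2 * ℓ ^ 2 + 1) ^ 2
          + (k ^ 2 * ℓ ^ 2 - 1) ^ 2 * Real.cos (2 * k * (π - ℓ₃))) := by
    unfold chainA chainB
    rw [h1, h2, hkey]
    linear_combination
      (64 * Real.sin (k * π) ^ 2 *
        (((k * ℓ + 1) ^ 2 * Real.cos (((m : ℝ) - k) * (π - ℓ₃))
            + (k * ℓ - 1) ^ 2 * Real.cos (((m : ℝ) + k) * (π - ℓ₃))) ^ 2
          + ((k * ℓ - 1) ^ 2 * Real.sin (((m : ℝ) + k) * (π - ℓ₃))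
            + (k * ℓ + 1) ^ 2 * Real.sin (((m : ℝ) - k) * (π - ℓ₃))) ^ 2)) * hc
      + (64 * Real.sin (k * π) ^ 2 * (k * ℓ + 1) ^ 4) * hQ
      + (64 * Real.sin (k * π) ^ 2 * (k * ℓ - 1) ^ 4) * hP
  refine ⟨main, fun hk hnk => ?_⟩
  rw [main]
  have hs : Real.sin (k * π) ≠ 0 := by
    intro h
    obtain ⟨n, hn⟩ := Real.sin_eq_zero_iff.mp h
    exact hnk ⟨n, (mul_right_cancel₀ (ne_of_gt Real.pi_pos) hn).symm⟩
  have hs2 : 0 < Real.sin (k * π) ^ 2 := pow_two_pos_of_ne_zero hs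
  have hkl : k * ℓ ≠ 0 := by positivity
  have hbr : 0 < 4 * k ^ 2 * ℓ ^ 2 + (k ^ 2 * ℓ ^ 2 + 1) ^ 2
      + (k ^ 2 * ℓ ^ 2 - 1) ^ 2 * Real.cos (2 * k * (π - ℓ₃)) := by
    have h1 := Real.neg_one_le_cos (2 * k * (π - ℓ₃))
    have h2 : 0 < k ^ 2 * ℓ ^ 2 := by positivity
    nlinarith [sq_nonneg (k ^ 2 * ℓ ^ 2 - 1)]
  have : 0 < 128 * Real.sin (k * π) ^ 2 := by positivity
  positivity
end

section
/- Suppose A = m + 1/2 for some integer m, and let n be a positive integer and k = n − 1/2. Then a(k) = 0 and b(k) = 0, and c(k) = 0 if and only if ((2n−1)²ℓ² − 4)² · sin((2n−1)ℓ₁/2) · sin²((2n−1)ℓ₃/2) = 0. -/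
open Real

/-- The function `c` of the Floquet spectral condition. -/
noncomputable def chainC (ℓ ℓ₁ ℓ₃ A k : ℝ) : ℝ :=
  -(k * ℓ - 1) ^ 2 * (4 * Real.sin (2 * π * A + k * ℓ₁)
      + (k * ℓ + 1) ^ 2 * (Real.sin (k * (2 * π - ℓ₁))
        + 2 * Real.sin (k * ℓ₁) * Real.cos (2 * k * (π - ℓ₃))))
    + 4 * (k * ℓ + 1) ^ 2 * Real.sin (2 * π * A - k * ℓ₁)
    + (k ^ 2 * ℓ ^ 2 + 3) ^ 2 * Real.sin (k * (ℓ₁ + 2 * π))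

theorem stmt_1 (A : ℝ) (m : ℤ) (hA : A = m + 1 / 2)
    (ℓ : ℝ) (hℓ : 0 < ℓ) (ℓ₁ : ℝ) (hℓ₁ : 0 ≤ ℓ₁)
    (ℓ₃ : ℝ) (hℓ₃ : ℓ₃ ∈ Set.Ioo 0 (2 * π))
    (n : ℕ) (hn : 0 < n) (k : ℝ) (hk : k = n - 1 / 2) :
    chainA ℓ ℓ₃ A k = 0 ∧ chainB ℓ ℓ₃ A k = 0 ∧
      (chainC ℓ ℓ₁ ℓ₃ A k = 0 ↔
        ((2 * n - 1) ^ 2 * ℓ ^ 2 - 4) ^ 2 * Real.sin ((2 * n - 1) * ℓ₁ / 2)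
          * Real.sin ((2 * n - 1) * ℓ₃ / 2) ^ 2 = 0) := by
  have hs1 : Real.sin ((A + k) * π) = 0 := by
    have : (A + k) * π = ((m + n : ℤ) : ℝ) * π := by push_cast; rw [hA, hk]; ring
    rw [this, Real.sin_int_mul_pi]
  have hs2 : Real.sin ((A - k) * π) = 0 := by
    have : (A - k) * π = ((m + 1 - n : ℤ) : ℝ) * π := by push_cast; rw [hA, hk]; ring
    rw [this, Real.sin_int_mul_pi]
  refine ⟨by simp [chainA, hs1, hs2], by simp [chainB, hs1, hs2], ?_⟩
  have h1 : Real.sin (2 * π * A + k * ℓ₁) = -Real.sin (k * ℓ₁) := by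
    have : 2 * π * A + k * ℓ₁ = (k * ℓ₁ + π) + (m : ℤ) * (2 * π) := by rw [hA]; push_cast; ring
    rw [this, Real.sin_add_int_mul_two_pi, Real.sin_add_pi]
  have h2 : Real.sin (2 * π * A - k * ℓ₁) = Real.sin (k * ℓ₁) := by
    have : 2 * π * A - k * ℓ₁ = (π - k * ℓ₁) + (m : ℤ) * (2 * π) := by rw [hA]; push_cast; ring
    rw [this, Real.sin_add_int_mul_two_pi, Real.sin_pi_sub]
  have h3 : Real.sin (k * (2 * π - ℓ₁)) = Real.sin (k * ℓ₁) := by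
    have : k * (2 * π - ℓ₁) = (π - k * ℓ₁) + (((n : ℤ) - 1 : ℤ) : ℝ) * (2 * π) := by
      rw [hk]; push_cast; ring
    rw [this, Real.sin_add_int_mul_two_pi, Real.sin_pi_sub]
  have h4 : Real.cos (2 * k * (π - ℓ₃)) = -Real.cos (2 * (k * ℓ₃)) := by
    have : 2 * k * (π - ℓ₃) = (π - 2 * (k * ℓ₃)) + (((n : ℤ) - 1 : ℤ) : ℝ) * (2 * π) := by
      rw [hk]; push_cast; ring
    rw [this, Real.cos_add_int_mul_two_pi, Real.cos_pi_sub]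
  have h5 : Real.sin (k * (ℓ₁ + 2 * π)) = -Real.sin (k * ℓ₁) := by
    have : k * (ℓ₁ + 2 * π) = (k * ℓ₁ + π) + (((n : ℤ) - 1 : ℤ) : ℝ) * (2 * π) := by
      rw [hk]; push_cast; ring
    rw [this, Real.sin_add_int_mul_two_pi, Real.sin_add_pi]
  have hC : chainC ℓ ℓ₁ ℓ₃ A k
      = -4 * (k ^ 2 * ℓ ^ 2 - 1) ^ 2 * Real.sin (k * ℓ₁) * Real.sin (k * ℓ₃) ^ 2 := by
    rw [chainC, h1, h2, h3, h4, h5, Real.cos_two_mul']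
    have h6 := Real.sin_sq_add_cos_sq (k * ℓ₃)
    linear_combination (2 * (k * ℓ - 1) ^ 2 * (k * ℓ + 1) ^ 2 * Real.sin (k * ℓ₁)) * h6
  have e1 : (2 * (n : ℝ) - 1) * ℓ₁ / 2 = k * ℓ₁ := by rw [hk]; ring
  have e3 : (2 * (n : ℝ) - 1) * ℓ₃ / 2 = k * ℓ₃ := by rw [hk]; ring
  have e2 : (2 * (n : ℝ) - 1) ^ 2 * ℓ ^ 2 - 4 = 4 * (k ^ 2 * ℓ ^ 2 - 1) := by rw [hk]; ring
  rw [hC, e1, e3, e2]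
  constructor
  · intro h; linear_combination (-4 : ℝ) * h
  · intro h; linear_combination (-1 / 4 : ℝ) * h
end

section
/- Suppose A = m + 1/2 for some integer m, let n be a positive integer, and suppose ℓ = (n − 1/2)⁻¹. Then at k = n − 1/2 one has a(k) = b(k) = c(k) = 0, for all ℓ₁ ≥ 0 and all ℓ₃ ∈ (0,2π); hence k² belongs to the spectrum independently of the other parameters. -/
open Real

theorem stmt_2 (A : ℝ) (m : ℤ) (hA : A = m + 1 / 2)
    (n : ℕ) (hn : 0 < n) (ℓ : ℝ) (hℓ : ℓ = ((n : ℝ) - 1 / 2)⁻¹)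
    (k : ℝ) (hk : k = (n : ℝ) - 1 / 2) :
    ∀ ℓ₁ : ℝ, 0 ≤ ℓ₁ → ∀ ℓ₃ ∈ Set.Ioo 0 (2 * π),
      chainA ℓ ℓ₃ A k = 0 ∧ chainB ℓ ℓ₃ A k = 0 ∧ chainC ℓ ℓ₁ ℓ₃ A k = 0 := by
  intro ℓ₁ hℓ₁ ℓ₃ hℓ₃
  have hn1 : (1 : ℝ) ≤ (n : ℝ) := by exact_mod_cast hn
  have hkne : (n : ℝ) - 1 / 2 ≠ 0 := by linarith
  have hkl : k * ℓ = 1 := by rw [hℓ, hk]; rw [mul_inv_cancel₀ hkne]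
  have hkl2 : k ^ 2 * ℓ ^ 2 = 1 := by
    have := hkl; nlinarith [hkl]
  have h1 : Real.sin ((A + k) * π) = 0 := by
    have h : A + k = ((m + n : ℤ) : ℝ) := by push_cast; rw [hA, hk]; ring
    rw [h, Real.sin_int_mul_pi]
  have e1 : Real.sin (2 * π * A - k * ℓ₁) = Real.sin (k * ℓ₁) := by
    have h : 2 * π * A - k * ℓ₁ = (π - k * ℓ₁) + (m : ℤ) * (2 * π) := by
      rw [hA]; ring
    rw [h, Real.sin_add_int_mul_two_pi, Real.sin_pi_sub]
  have e2 : Real.sin (k * (ℓ₁ + 2 * π)) = -Real.sin (k * ℓ₁) := by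
    have h : k * (ℓ₁ + 2 * π) = (k * ℓ₁ - π) + (n : ℤ) * (2 * π) := by
      rw [hk]; push_cast; ring
    rw [h, Real.sin_add_int_mul_two_pi, Real.sin_sub_pi]
  refine ⟨?_, ?_, ?_⟩
  · simp [chainA, hkl, h1]
  · simp [chainB, hkl, h1]
  · simp only [chainC, hkl, hkl2, e1, e2]; ring
end

section
/- Suppose A = m + 1/2 for some integer m, and suppose that at least one of the lengths ℓ₁, ℓ₃ equals 2pπ/q for some coprime positive integers p, q with q odd. Then for every positive integer n, at k = q(n − 1/2) one has a(k) = b(k) = c(k) = 0, so that k² = q²(n − 1/2)² belongs to the spectrum. -/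
open Real

lemma sin_shift (x : ℝ) (c : ℤ) : Real.sin (x + π + c * (2 * π)) = -Real.sin x := by
  rw [Real.sin_add_int_mul_two_pi, Real.sin_add_pi]

lemma cos_shift (x : ℝ) (c : ℤ) : Real.cos (x + π + c * (2 * π)) = -Real.cos x := by
  rw [Real.cos_add_int_mul_two_pi, Real.cos_add_pi]

theorem stmt_3 (A : ℝ) (m : ℤ) (hA : A = m + 1 / 2)
    (ℓ : ℝ) (hℓ : 0 < ℓ) (ℓ₁ : ℝ) (hℓ₁ : 0 ≤ ℓ₁)
    (ℓ₃ : ℝ) (hℓ₃ : ℓ₃ ∈ Set.Ioo 0 (2 * π))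
    (p q : ℕ) (hp : 0 < p) (hq : 0 < q) (hpq : Nat.Coprime p q) (hqodd : Odd q)
    (hlen : ℓ₁ = 2 * p * π / q ∨ ℓ₃ = 2 * p * π / q)
    (n : ℕ) (hn : 0 < n) (k : ℝ) (hk : k = q * ((n : ℝ) - 1 / 2)) :
    chainA ℓ ℓ₃ A k = 0 ∧ chainB ℓ ℓ₃ A k = 0 ∧ chainC ℓ ℓ₁ ℓ₃ A k = 0 := by

  obtain ⟨r, hr⟩ : ∃ r : ℕ, q * (2 * n - 1) = 2 * r + 1 := by
    have : Odd (q * (2 * n - 1)) := hqodd.mul ⟨n - 1, by omega⟩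
    obtain ⟨r, hr⟩ := this
    exact ⟨r, by omega⟩
  have hrR : (q : ℝ) * (2 * n - 1) = 2 * r + 1 := by
    have h1 := hr
    zify [show 1 ≤ 2 * n by omega] at h1
    exact_mod_cast h1
  have hk' : k = (r : ℝ) + 1 / 2 := by
    rw [hk]; nlinarith [hrR]
  have hqR : (q : ℝ) ≠ 0 := Nat.cast_ne_zero.mpr hq.ne'
  have hab : chainA ℓ ℓ₃ A k = 0 ∧ chainB ℓ ℓ₃ A k = 0 := by
    have h1 : (A + k) * π = ((m + r + 1 : ℤ) : ℝ) * π := by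
      rw [hA, hk']; push_cast; ring
    have h2 : (A - k) * π = ((m - r : ℤ) : ℝ) * π := by
      rw [hA, hk']; push_cast; ring
    constructor
    · unfold chainA
      rw [h1, h2, Real.sin_int_mul_pi, Real.sin_int_mul_pi]; ring
    · unfold chainB
      rw [h1, h2, Real.sin_int_mul_pi, Real.sin_int_mul_pi]; ring
  refine ⟨hab.1, hab.2, ?_⟩
  rcases hlen with h | h
  · -- ℓ₁ = 2pπ/q
    have hkl : k * ℓ₁ = ((p * (2 * n - 1) : ℤ) : ℝ) * π := by
      rw [hk, h]
      field_simp
      push_cast [Nat.cast_sub (by omega : 1 ≤ 2 * n)]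
      push_cast
      ring
    have e1 : 2 * π * A + k * ℓ₁ = (((2 * m + 1) + p * (2 * n - 1) : ℤ) : ℝ) * π := by
      rw [hA, hkl]; push_cast; ring
    have e2 : 2 * π * A - k * ℓ₁ = (((2 * m + 1) - p * (2 * n - 1) : ℤ) : ℝ) * π := by
      rw [hA, hkl]; push_cast; ring
    have e3 : k * (2 * π - ℓ₁) = (((2 * r + 1) - p * (2 * n - 1) : ℤ) : ℝ) * π := by
      have : k * (2 * π - ℓ₁) = k * (2 * π) - k * ℓ₁ := by ring
      rw [this, hkl, hk']; push_cast; ring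
    have e4 : k * (ℓ₁ + 2 * π) = (((2 * r + 1) + p * (2 * n - 1) : ℤ) : ℝ) * π := by
      have : k * (ℓ₁ + 2 * π) = k * ℓ₁ + k * (2 * π) := by ring
      rw [this, hkl, hk']; push_cast; ring
    unfold chainC
    rw [e1, e2, e3, e4, hkl]
    rw [Real.sin_int_mul_pi, Real.sin_int_mul_pi, Real.sin_int_mul_pi,
      Real.sin_int_mul_pi, Real.sin_int_mul_pi]
    ring
  · -- ℓ₃ = 2pπ/q
    have hkl : 2 * k * ℓ₃ = ((p * (2 * n - 1) : ℤ) : ℝ) * (2 * π) := by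
      rw [hk, h]
      field_simp
      push_cast [Nat.cast_sub (by omega : 1 ≤ 2 * n)]
      push_cast
      ring
    have e1 : 2 * π * A + k * ℓ₁ = k * ℓ₁ + π + (m : ℤ) * (2 * π) := by
      rw [hA]; push_cast; ring
    have e2 : 2 * π * A - k * ℓ₁ = -(k * ℓ₁) + π + (m : ℤ) * (2 * π) := by
      rw [hA]; push_cast; ring
    have e3 : k * (2 * π - ℓ₁) = -(k * ℓ₁) + π + (r : ℤ) * (2 * π) := by
      rw [hk']; push_cast; ring
    have e4 : k * (ℓ₁ + 2 * π) = k * ℓ₁ + π + (r : ℤ) * (2 * π) := by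
      rw [hk']; push_cast; ring
    have e5 : 2 * k * (π - ℓ₃) = 0 + π + (((r : ℤ) - p * (2 * n - 1)) : ℤ) * (2 * π) := by
      have h2k : 2 * k * π = π + (r : ℤ) * (2 * π) := by rw [hk']; push_cast; ring
      have : 2 * k * (π - ℓ₃) = 2 * k * π - 2 * k * ℓ₃ := by ring
      rw [this, h2k, hkl]; push_cast; ring
    unfold chainC
    rw [e1, e2, e3, e4, e5, sin_shift, sin_shift, sin_shift, sin_shift, cos_shift,
      Real.sin_neg, Real.cos_zero]
    ring
end

section
/- If A + ℓ⁻¹ is an integer, then at k = ℓ⁻¹ one has a(k) = b(k) = c(k) = 0, for all ℓ₁ ≥ 0 and all ℓ₃ ∈ (0,2π); hence the energy k² = ℓ⁻² is a flat band independently of the other parameters. -/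
open Real

theorem stmt_4 (A : ℝ) (ℓ : ℝ) (hℓ : 0 < ℓ) (hA : ∃ m : ℤ, A + ℓ⁻¹ = m)
    (k : ℝ) (hk : k = ℓ⁻¹) :
    ∀ ℓ₁ : ℝ, 0 ≤ ℓ₁ → ∀ ℓ₃ ∈ Set.Ioo 0 (2 * π),
      chainA ℓ ℓ₃ A k = 0 ∧ chainB ℓ ℓ₃ A k = 0 ∧ chainC ℓ ℓ₁ ℓ₃ A k = 0 := by
  intro ℓ₁ _ ℓ₃ _
  obtain ⟨m, hm⟩ := hA
  have hℓ0 : ℓ ≠ 0 := ne_of_gt hℓ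
  have hkl : k * ℓ = 1 := by rw [hk]; field_simp
  have hk2 : k ^ 2 * ℓ ^ 2 = 1 := by
    have : (k * ℓ) ^ 2 = 1 := by rw [hkl]; ring
    nlinarith [this]
  have hAk : A + k = (m : ℝ) := by rw [hk]; exact hm
  have h1 : Real.sin ((A + k) * π) = 0 := by
    rw [hAk]; exact Real.sin_int_mul_pi m
  have hA' : A = (m : ℝ) - k := by linarith
  have hs : Real.sin (2 * π * (m : ℝ)) = 0 := by
    have := Real.sin_int_mul_pi (2 * m)
    push_cast at this
    rw [show 2 * π * (m : ℝ) = 2 * (m : ℝ) * π by ring]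
    exact this
  have hc : Real.cos (2 * π * (m : ℝ)) = 1 := by
    have := Real.cos_int_mul_two_pi m
    rw [show 2 * π * (m : ℝ) = (m : ℝ) * (2 * π) by ring]
    exact this
  have h2 : Real.sin (2 * π * A - k * ℓ₁) = - Real.sin (k * (ℓ₁ + 2 * π)) := by
    rw [show 2 * π * A - k * ℓ₁ = 2 * π * (m : ℝ) - k * (ℓ₁ + 2 * π) by rw [hA']; ring,
      Real.sin_sub, hs, hc]
    ring
  refine ⟨?_, ?_, ?_⟩
  · simp only [chainA, hkl, h1]; ring
  · simp only [chainB, hkl, h1]; ring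
  · simp only [chainC, hkl, hk2, h2]; ring
end

section
/- Let ℓ₃ ∈ (0,2π) with ℓ₃ ≠ π, let m be an integer, and set k = mπ/(2(π−ℓ₃)). Assume k > 0, 2k is not a positive integer, and 2A is not an integer. Then a(k) = 0 and b(k) = 0 hold simultaneously if and only if: tan(Aπ) = −(2kℓ/(k²ℓ²+1))·tan(kπ) in case m is odd, and tan(Aπ) = −((k²ℓ²+1)/(2kℓ))·tan(kπ) in case m is even. -/
open Real

theorem stmt_5 (ℓ : ℝ) (hℓ : 0 < ℓ) (A : ℝ) (hA : ¬∃ j : ℤ, 2 * A = j)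
    (ℓ₃ : ℝ) (hℓ₃ : ℓ₃ ∈ Set.Ioo 0 (2 * π)) (hℓ₃π : ℓ₃ ≠ π)
    (m : ℤ) (k : ℝ) (hk : k = m * π / (2 * (π - ℓ₃)))
    (hkpos : 0 < k) (hk2 : ¬∃ j : ℕ, 0 < j ∧ 2 * k = j) :
    (Odd m →
      ((chainA ℓ ℓ₃ A k = 0 ∧ chainB ℓ ℓ₃ A k = 0) ↔
        Real.tan (A * π) = -(2 * k * ℓ / (k ^ 2 * ℓ ^ 2 + 1)) * Real.tan (k * π)))
    ∧ (Even m →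
      ((chainA ℓ ℓ₃ A k = 0 ∧ chainB ℓ ℓ₃ A k = 0) ↔
        Real.tan (A * π) = -((k ^ 2 * ℓ ^ 2 + 1) / (2 * k * ℓ)) * Real.tan (k * π))) := by
  have hπ : (0:ℝ) < π := Real.pi_pos
  have hPne : π - ℓ₃ ≠ 0 := sub_ne_zero.mpr (Ne.symm hℓ₃π)
  have hkP : k * (π - ℓ₃) = m * π / 2 := by
    rw [hk]; field_simp
  have hcA : Real.cos (A * π) ≠ 0 := by
    intro h
    rcases Real.cos_eq_zero_iff.mp h with ⟨n, hn⟩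
    refine hA ⟨2*n+1, ?_⟩
    push_cast
    have : A * π = (2*(n:ℝ)+1) * π / 2 := hn
    nlinarith
  have hsA : Real.sin (A * π) ≠ 0 := by
    intro h
    rcases Real.sin_eq_zero_iff.mp h with ⟨n, hn⟩
    refine hA ⟨2*n, ?_⟩
    push_cast
    nlinarith
  have hk2' : ∀ j : ℤ, 2 * k ≠ j := by
    rintro j hj
    have hj0 : (0:ℝ) < j := by linarith
    have hj0' : 0 < j := by exact_mod_cast hj0
    refine hk2 ⟨j.toNat, by omega, ?_⟩
    rw [hj]
    exact_mod_cast congrArg (Int.cast : ℤ → ℝ) (Int.toNat_of_nonneg hj0'.le).symm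
  have hck : Real.cos (k * π) ≠ 0 := by
    intro h
    rcases Real.cos_eq_zero_iff.mp h with ⟨n, hn⟩
    refine hk2' (2*n+1) ?_
    push_cast
    have : k * π = (2*(n:ℝ)+1) * π / 2 := hn
    nlinarith
  have hsk : Real.sin (k * π) ≠ 0 := by
    intro h
    rcases Real.sin_eq_zero_iff.mp h with ⟨n, hn⟩
    refine hk2' (2*n) ?_
    push_cast
    nlinarith
  have hden : k ^ 2 * ℓ ^ 2 + 1 ≠ 0 := by positivity
  have hkl : 2 * k * ℓ ≠ 0 := by positivity
  -- expansion lemmas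
  have expandA : chainA ℓ ℓ₃ A k =
      8 * ((k * ℓ + 1) ^ 2
          * (Real.sin (A*π) * Real.cos (k*π) + Real.cos (A*π) * Real.sin (k*π))
          * (Real.cos (A*(π-ℓ₃)) * Real.cos (k*(π-ℓ₃)) + Real.sin (A*(π-ℓ₃)) * Real.sin (k*(π-ℓ₃)))
        - (k * ℓ - 1) ^ 2
          * (Real.sin (A*π) * Real.cos (k*π) - Real.cos (A*π) * Real.sin (k*π))
          * (Real.cos (A*(π-ℓ₃)) * Real.cos (k*(π-ℓ₃)) - Real.sin (A*(π-ℓ₃)) * Real.sin (k*(π-ℓ₃)))) := by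
    unfold chainA
    rw [show (A+k)*π = A*π + k*π by ring, show (A-k)*π = A*π - k*π by ring,
        show (A-k)*(π-ℓ₃) = A*(π-ℓ₃) - k*(π-ℓ₃) by ring,
        show (A+k)*(π-ℓ₃) = A*(π-ℓ₃) + k*(π-ℓ₃) by ring]
    simp only [Real.sin_add, Real.sin_sub, Real.cos_add, Real.cos_sub]
  have expandB : chainB ℓ ℓ₃ A k =
      8 * ((k * ℓ - 1) ^ 2
          * (Real.sin (A*π) * Real.cos (k*π) - Real.cos (A*π) * Real.sin (k*π))
          * (Real.sin (A*(π-ℓ₃)) * Real.cos (k*(π-ℓ₃)) + Real.cos (A*(π-ℓ₃)) * Real.sin (k*(π-ℓ₃)))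
        - (k * ℓ + 1) ^ 2
          * (Real.sin (A*π) * Real.cos (k*π) + Real.cos (A*π) * Real.sin (k*π))
          * (Real.sin (A*(π-ℓ₃)) * Real.cos (k*(π-ℓ₃)) - Real.cos (A*(π-ℓ₃)) * Real.sin (k*(π-ℓ₃)))) := by
    unfold chainB
    rw [show (A+k)*π = A*π + k*π by ring, show (A-k)*π = A*π - k*π by ring,
        show (A-k)*(π-ℓ₃) = A*(π-ℓ₃) - k*(π-ℓ₃) by ring,
        show (A+k)*(π-ℓ₃) = A*(π-ℓ₃) + k*(π-ℓ₃) by ring]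
    simp only [Real.sin_add, Real.sin_sub, Real.cos_add, Real.cos_sub]
  set s := Real.sin (A*π) with hs_def
  set c := Real.cos (A*π) with hc_def
  set sk := Real.sin (k*π) with hsk_def
  set ck := Real.cos (k*π) with hck_def
  set sP := Real.sin (A*(π-ℓ₃)) with hsP_def
  set cP := Real.cos (A*(π-ℓ₃)) with hcP_def
  have hP2 : sP ^ 2 + cP ^ 2 = 1 := Real.sin_sq_add_cos_sq _
  constructor
  · -- odd case
    rintro ⟨n, rfl⟩
    have hcos0 : Real.cos (k*(π-ℓ₃)) = 0 := by
      apply Real.cos_eq_zero_iff.mpr ⟨n, ?_⟩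
      rw [hkP]; push_cast; ring
    have hsin0 : Real.sin (k*(π-ℓ₃)) ≠ 0 := by
      intro h
      have := Real.sin_sq_add_cos_sq (k*(π-ℓ₃))
      rw [h, hcos0] at this; norm_num at this
    set skP := Real.sin (k*(π-ℓ₃)) with hskP_def
    have hA' : chainA ℓ ℓ₃ A k =
        16 * skP * sP * ((k^2*ℓ^2+1) * s * ck + 2*k*ℓ * c * sk) := by
      rw [expandA, hcos0]; ring
    have hB' : chainB ℓ ℓ₃ A k =
        16 * skP * cP * ((k^2*ℓ^2+1) * s * ck + 2*k*ℓ * c * sk) := by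
      rw [expandB, hcos0]; ring
    constructor
    · rintro ⟨ha, hb⟩
      rw [hA'] at ha
      rw [hB'] at hb
      have hY : (k^2*ℓ^2+1) * s * ck + 2*k*ℓ * c * sk = 0 := by
        by_contra hY
        have h1 : sP = 0 := by
          rcases mul_eq_zero.mp ha with h | h
          · rcases mul_eq_zero.mp h with h | h
            · rcases mul_eq_zero.mp h with h | h
              · norm_num at h
              · exact absurd h hsin0
            · exact h
          · exact absurd h hY
        have h2 : cP = 0 := by
          rcases mul_eq_zero.mp hb with h | h
          · rcases mul_eq_zero.mp h with h | h
            · rcases mul_eq_zero.mp h with h | h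
              · norm_num at h
              · exact absurd h hsin0
            · exact h
          · exact absurd h hY
        rw [h1, h2] at hP2; norm_num at hP2
      rw [Real.tan_eq_sin_div_cos, Real.tan_eq_sin_div_cos, ← hs_def, ← hc_def,
        ← hsk_def, ← hck_def]
      field_simp
      linear_combination hY
    · intro ht
      rw [Real.tan_eq_sin_div_cos, Real.tan_eq_sin_div_cos, ← hs_def, ← hc_def,
        ← hsk_def, ← hck_def] at ht
      field_simp at ht
      have hY : (k^2*ℓ^2+1) * s * ck + 2*k*ℓ * c * sk = 0 := by
        linear_combination ht
      exact ⟨by rw [hA', hY]; ring, by rw [hB', hY]; ring⟩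
  · -- even case
    rintro ⟨n, rfl⟩
    have hsin0 : Real.sin (k*(π-ℓ₃)) = 0 := by
      apply Real.sin_eq_zero_iff.mpr ⟨n, ?_⟩
      rw [hkP]; push_cast; ring
    have hcos0 : Real.cos (k*(π-ℓ₃)) ≠ 0 := by
      intro h
      have := Real.sin_sq_add_cos_sq (k*(π-ℓ₃))
      rw [h, hsin0] at this; norm_num at this
    set ckP := Real.cos (k*(π-ℓ₃)) with hckP_def
    have hA' : chainA ℓ ℓ₃ A k =
        16 * ckP * cP * (2*k*ℓ * s * ck + (k^2*ℓ^2+1) * c * sk) := by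
      rw [expandA, hsin0]; ring
    have hB' : chainB ℓ ℓ₃ A k =
        -(16 * ckP * sP * (2*k*ℓ * s * ck + (k^2*ℓ^2+1) * c * sk)) := by
      rw [expandB, hsin0]; ring
    constructor
    · rintro ⟨ha, hb⟩
      rw [hA'] at ha
      rw [hB', neg_eq_zero] at hb
      have hY : 2*k*ℓ * s * ck + (k^2*ℓ^2+1) * c * sk = 0 := by
        by_contra hY
        have h1 : cP = 0 := by
          rcases mul_eq_zero.mp ha with h | h
          · rcases mul_eq_zero.mp h with h | h
            · rcases mul_eq_zero.mp h with h | h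
              · norm_num at h
              · exact absurd h hcos0
            · exact h
          · exact absurd h hY
        have h2 : sP = 0 := by
          rcases mul_eq_zero.mp hb with h | h
          · rcases mul_eq_zero.mp h with h | h
            · rcases mul_eq_zero.mp h with h | h
              · norm_num at h
              · exact absurd h hcos0
            · exact h
          · exact absurd h hY
        rw [h1, h2] at hP2; norm_num at hP2
      rw [Real.tan_eq_sin_div_cos, Real.tan_eq_sin_div_cos, ← hs_def, ← hc_def,
        ← hsk_def, ← hck_def]
      field_simp
      linear_combination hY
    · intro ht
      rw [Real.tan_eq_sin_div_cos, Real.tan_eq_sin_div_cos, ← hs_def, ← hc_def,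
        ← hsk_def, ← hck_def] at ht
      field_simp at ht
      have hY : 2*k*ℓ * s * ck + (k^2*ℓ^2+1) * c * sk = 0 := by
        linear_combination ht
      exact ⟨by rw [hA', hY]; ring, by rw [hB', hY]; ring⟩
end

section
/- For every A ∈ ℝ, the Lebesgue measure of the set { k ∈ [0,1) : sin((k−A)π)·sin((k+A)π) ≥ 0 } equals 1 − (1/π)·arccos(cos(2Aπ)). -/
open Real MeasureTheory

theorem stmt_12 (A : ℝ) :
    volume {k : ℝ | k ∈ Set.Ico (0 : ℝ) 1 ∧
        0 ≤ Real.sin ((k - A) * π) * Real.sin ((k + A) * π)}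
      = ENNReal.ofReal (1 - (1 / π) * Real.arccos (Real.cos (2 * A * π))) := by
  have hπ : (0:ℝ) < π := Real.pi_pos
  set a := Real.arccos (Real.cos (2 * A * π)) with ha_def
  set t := a / (2 * π) with ht_def
  have ha0 : 0 ≤ a := Real.arccos_nonneg _
  have haπ : a ≤ π := Real.arccos_le_pi _
  have hcos : Real.cos a = Real.cos (2 * A * π) :=
    Real.cos_arccos (neg_one_le_cos _) (Real.cos_le_one _)
  have h2t : 2 * t * π = a := by
    rw [ht_def]; field_simp
  have ht0 : 0 ≤ t := div_nonneg ha0 (by positivity)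
  have ht2 : t ≤ 1 - t := by
    rw [ht_def]
    rw [div_le_iff₀ (by positivity)]
    nlinarith
  -- membership reformulation
  have hmem : ∀ k : ℝ, (0 ≤ Real.sin ((k - A) * π) * Real.sin ((k + A) * π)) ↔
      Real.cos (2 * k * π) ≤ Real.cos a := by
    intro k
    have hprod : Real.cos a - Real.cos (2 * k * π) =
        2 * (Real.sin ((k - A) * π) * Real.sin ((k + A) * π)) := by
      rw [hcos, Real.cos_sub_cos]
      have e1 : (2 * A * π + 2 * k * π) / 2 = (k + A) * π := by ring
      have e2 : (2 * A * π - 2 * k * π) / 2 = -((k - A) * π) := by ring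
      rw [e1, e2, Real.sin_neg]
      ring
    constructor
    · intro h; nlinarith
    · intro h; nlinarith
  set S := {k : ℝ | k ∈ Set.Ico (0 : ℝ) 1 ∧
      0 ≤ Real.sin ((k - A) * π) * Real.sin ((k + A) * π)} with hS
  have hsub1 : Set.Ico t (1 - t) ⊆ S := by
    intro k hk
    obtain ⟨hk1, hk2⟩ := hk
    have hk0 : 0 ≤ k := le_trans ht0 hk1
    have hk1' : k < 1 := lt_of_lt_of_le hk2 (by linarith)
    refine ⟨⟨hk0, hk1'⟩, (hmem k).2 ?_⟩
    rcases le_or_gt (2 * k * π) π with hle | hgt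
    · apply Real.cos_le_cos_of_nonneg_of_le_pi ha0 hle
      nlinarith
    · have : Real.cos (2 * k * π) = Real.cos (2 * π - 2 * k * π) := by
        rw [Real.cos_sub, Real.cos_two_pi, Real.sin_two_pi]; ring
      rw [this]
      apply Real.cos_le_cos_of_nonneg_of_le_pi ha0 (by linarith)
      nlinarith
  have hsub2 : S ⊆ Set.Icc t (1 - t) := by
    intro k hk
    obtain ⟨⟨hk0, hk1⟩, hk2⟩ := hk
    have hc : Real.cos (2 * k * π) ≤ Real.cos a := (hmem k).1 hk2
    constructor
    · by_contra hlt
      push_neg at hlt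
      have h1 : 2 * k * π < a := by nlinarith
      have := Real.strictAntiOn_cos ⟨by positivity, by linarith⟩ ⟨ha0, haπ⟩ h1
      linarith
    · by_contra hlt
      push_neg at hlt
      have h1 : 2 * π - 2 * k * π < a := by nlinarith
      have h2 : 0 ≤ 2 * π - 2 * k * π := by nlinarith
      have heq : Real.cos (2 * k * π) = Real.cos (2 * π - 2 * k * π) := by
        rw [Real.cos_sub, Real.cos_two_pi, Real.sin_two_pi]; ring
      have := Real.strictAntiOn_cos ⟨h2, by linarith⟩ ⟨ha0, haπ⟩ h1
      rw [heq] at hc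
      linarith
  have hv1 : volume (Set.Ico t (1 - t)) = ENNReal.ofReal (1 - 2 * t) := by
    rw [Real.volume_Ico]; congr 1; ring
  have hv2 : volume (Set.Icc t (1 - t)) = ENNReal.ofReal (1 - 2 * t) := by
    rw [Real.volume_Icc]; congr 1; ring
  have hfin : ENNReal.ofReal (1 - 2 * t) =
      ENNReal.ofReal (1 - (1 / π) * a) := by
    congr 1
    field_simp [ht_def]
    linarith [h2t]
  refine le_antisymm ?_ ?_
  · calc volume S ≤ volume (Set.Icc t (1 - t)) := measure_mono hsub2
      _ = _ := by rw [hv2, hfin]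
  · have : ENNReal.ofReal (1 - (1 / π) * a) = volume (Set.Ico t (1 - t)) := by
      rw [hv1, hfin]
    rw [this]
    exact measure_mono hsub1
end

section
/- For A ∈ ℝ let A' = A mod 1/2, i.e. the unique A' ∈ [0,1/2) with A − A' ∈ (1/2)ℤ. Then the two-dimensional Lebesgue measure of the set { (x,y) ∈ [0,2π)×[0,2π) : sin(y−Aπ)·sin(y+Aπ)·sin(x)·sin(2y−x) ≥ 0 } equals 4π²·(1/2 + 2A' − 4A'²). -/
open Real MeasureTheory

private lemma sin_zeros_null (t : ℝ) :
    volume {x : ℝ | Real.sin x * Real.sin (t - x) = 0} = 0 := by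
  have hsub : {x : ℝ | Real.sin x * Real.sin (t - x) = 0}
      ⊆ Set.range (fun n : ℤ => (n : ℝ) * π) ∪ Set.range (fun n : ℤ => t - (n : ℝ) * π) := by
    intro x hx
    rcases mul_eq_zero.mp hx with h | h
    · rcases Real.sin_eq_zero_iff.mp h with ⟨n, hn⟩
      exact Or.inl ⟨n, hn⟩
    · rcases Real.sin_eq_zero_iff.mp h with ⟨n, hn⟩
      exact Or.inr ⟨n, show t - (n:ℝ) * π = x by linarith⟩
  exact measure_mono_null hsub
    (((Set.countable_range _).union (Set.countable_range _)).measure_zero _)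

private lemma sin_nonpos_of_mem (x : ℝ) (h1 : π ≤ x) (h2 : x ≤ 2 * π) : Real.sin x ≤ 0 := by
  have h3 : 0 ≤ Real.sin (x - π) :=
    Real.sin_nonneg_of_nonneg_of_le_pi (by linarith) (by linarith)
  rw [Real.sin_sub_pi] at h3
  linarith

private lemma slice_gt₁ (t : ℝ) (h0 : 0 ≤ t) (h1 : t ≤ π) :
    {x : ℝ | x ∈ Set.Ico (0:ℝ) (2 * π) ∧ 0 < Real.sin x * Real.sin (t - x)}
      = Set.Ioo 0 t ∪ Set.Ioo π (π + t) := by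
  have hπ := Real.pi_pos
  ext x
  simp only [Set.mem_setOf_eq, Set.mem_Ico, Set.mem_union, Set.mem_Ioo]
  constructor
  · rintro ⟨⟨hx0, hx2⟩, hprod⟩
    rcases mul_pos_iff.mp hprod with ⟨hs1, hs2⟩ | ⟨hs1, hs2⟩
    · left
      have hxpos : 0 < x := by
        rcases lt_or_eq_of_le hx0 with h | h
        · exact h
        · exfalso; rw [← h, Real.sin_zero] at hs1; exact lt_irrefl 0 hs1
      have hxlt : x < π := by
        by_contra hge; push_neg at hge
        have := sin_nonpos_of_mem x hge (le_of_lt hx2)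
        linarith
      refine ⟨hxpos, ?_⟩
      by_contra hcon
      push_neg at hcon
      have h4 : 0 ≤ Real.sin (x - t) :=
        Real.sin_nonneg_of_nonneg_of_le_pi (by linarith) (by linarith)
      have h5 : Real.sin (t - x) = - Real.sin (x - t) := by
        rw [show t - x = -(x - t) by ring, Real.sin_neg]
      linarith
    · right
      have hxgt : π < x := by
        by_contra hle; push_neg at hle
        have := Real.sin_nonneg_of_nonneg_of_le_pi hx0 hle
        linarith
      refine ⟨hxgt, ?_⟩
      by_contra hcon; push_neg at hcon
      have h4 : 0 ≤ Real.sin (x - t - π) :=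
        Real.sin_nonneg_of_nonneg_of_le_pi (by linarith) (by linarith)
      rw [Real.sin_sub_pi] at h4
      have h5 : Real.sin (t - x) = - Real.sin (x - t) := by
        rw [show t - x = -(x - t) by ring, Real.sin_neg]
      linarith
  · rintro (⟨hx1, hx2⟩ | ⟨hx1, hx2⟩)
    · have hs1 : 0 < Real.sin x := Real.sin_pos_of_pos_of_lt_pi hx1 (by linarith)
      have hs2 : 0 < Real.sin (t - x) :=
        Real.sin_pos_of_pos_of_lt_pi (by linarith) (by linarith)
      exact ⟨⟨by linarith, by linarith⟩, mul_pos hs1 hs2⟩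
    · have h1' : 0 < Real.sin (x - π) :=
        Real.sin_pos_of_pos_of_lt_pi (by linarith) (by linarith)
      rw [Real.sin_sub_pi] at h1'
      have h2' : 0 < Real.sin (x - t) :=
        Real.sin_pos_of_pos_of_lt_pi (by linarith) (by linarith)
      have h5 : Real.sin (t - x) = - Real.sin (x - t) := by
        rw [show t - x = -(x - t) by ring, Real.sin_neg]
      have hs1 : Real.sin x < 0 := by linarith
      have hs2 : Real.sin (t - x) < 0 := by rw [h5]; linarith
      exact ⟨⟨by linarith, by linarith⟩, mul_pos_of_neg_of_neg hs1 hs2⟩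

private lemma slice_gt₂ (t : ℝ) (h0 : π ≤ t) (h1 : t ≤ 2 * π) :
    {x : ℝ | x ∈ Set.Ico (0:ℝ) (2 * π) ∧ 0 < Real.sin x * Real.sin (t - x)}
      = Set.Ioo (t - π) π ∪ Set.Ioo t (2 * π) := by
  have hπ := Real.pi_pos
  ext x
  simp only [Set.mem_setOf_eq, Set.mem_Ico, Set.mem_union, Set.mem_Ioo]
  constructor
  · rintro ⟨⟨hx0, hx2⟩, hprod⟩
    rcases mul_pos_iff.mp hprod with ⟨hs1, hs2⟩ | ⟨hs1, hs2⟩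
    · left
      have hxlt : x < π := by
        by_contra hge; push_neg at hge
        have := sin_nonpos_of_mem x hge (le_of_lt hx2)
        linarith
      refine ⟨?_, hxlt⟩
      by_contra hcon; push_neg at hcon
      have : Real.sin (t - x) ≤ 0 := sin_nonpos_of_mem _ (by linarith) (by linarith)
      linarith
    · right
      have hxgtπ : π < x := by
        by_contra h2le; push_neg at h2le
        have := Real.sin_nonneg_of_nonneg_of_le_pi hx0 h2le
        linarith
      have hxgt : t < x := by
        by_contra hle; push_neg at hle
        have : 0 ≤ Real.sin (t - x) :=
          Real.sin_nonneg_of_nonneg_of_le_pi (by linarith) (by linarith)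
        linarith
      exact ⟨hxgt, hx2⟩
  · rintro (⟨hx1, hx2⟩ | ⟨hx1, hx2⟩)
    · have hs1 : 0 < Real.sin x := Real.sin_pos_of_pos_of_lt_pi (by linarith) hx2
      have hs2 : 0 < Real.sin (t - x) :=
        Real.sin_pos_of_pos_of_lt_pi (by linarith) (by linarith)
      exact ⟨⟨by linarith, by linarith⟩, mul_pos hs1 hs2⟩
    · have h1' : 0 < Real.sin (x - π) :=
        Real.sin_pos_of_pos_of_lt_pi (by linarith) (by linarith)
      rw [Real.sin_sub_pi] at h1'
      have h2' : 0 < Real.sin (x - t) :=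
        Real.sin_pos_of_pos_of_lt_pi (by linarith) (by linarith)
      have h5 : Real.sin (t - x) = - Real.sin (x - t) := by
        rw [show t - x = -(x - t) by ring, Real.sin_neg]
      have hs1 : Real.sin x < 0 := by linarith
      have hs2 : Real.sin (t - x) < 0 := by rw [h5]; linarith
      exact ⟨⟨by linarith, hx2⟩, mul_pos_of_neg_of_neg hs1 hs2⟩

private lemma ge_set_eq (t : ℝ) :
    {x : ℝ | x ∈ Set.Ico (0:ℝ) (2 * π) ∧ 0 ≤ Real.sin x * Real.sin (t - x)}
      = {x : ℝ | x ∈ Set.Ico (0:ℝ) (2 * π) ∧ 0 < Real.sin x * Real.sin (t - x)}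
        ∪ ({x : ℝ | Real.sin x * Real.sin (t - x) = 0} ∩ Set.Ico (0:ℝ) (2 * π)) := by
  ext x
  simp only [Set.mem_setOf_eq, Set.mem_union, Set.mem_inter_iff]
  constructor
  · rintro ⟨hx, hp⟩
    rcases lt_or_eq_of_le hp with h | h
    · exact Or.inl ⟨hx, h⟩
    · exact Or.inr ⟨h.symm, hx⟩
  · rintro (⟨hx, hp⟩ | ⟨hp, hx⟩)
    · exact ⟨hx, le_of_lt hp⟩
    · exact ⟨hx, le_of_eq hp.symm⟩

private lemma meas_union_null {s z : Set ℝ} (hz : volume z = 0) :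
    volume (s ∪ z) = volume s :=
  le_antisymm ((measure_union_le _ _).trans (by rw [hz, add_zero]))
    (measure_mono Set.subset_union_left)

private lemma slice_ge₁ (t : ℝ) (h0 : 0 ≤ t) (h1 : t ≤ π) :
    volume {x : ℝ | x ∈ Set.Ico (0:ℝ) (2 * π) ∧ 0 ≤ Real.sin x * Real.sin (t - x)}
      = ENNReal.ofReal (2 * t) := by
  have hπ := Real.pi_pos
  rw [ge_set_eq t,
    meas_union_null (measure_mono_null Set.inter_subset_left (sin_zeros_null t)),
    slice_gt₁ t h0 h1,
    measure_union (by rw [Set.disjoint_left]; rintro x ⟨_, h2⟩ ⟨h3, _⟩; linarith)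
      measurableSet_Ioo,
    Real.volume_Ioo, Real.volume_Ioo,
    ← ENNReal.ofReal_add (p := t - 0) (q := π + t - π) (by linarith) (by linarith)]
  congr 1; ring

private lemma slice_ge₂ (t : ℝ) (h0 : π ≤ t) (h1 : t ≤ 2 * π) :
    volume {x : ℝ | x ∈ Set.Ico (0:ℝ) (2 * π) ∧ 0 ≤ Real.sin x * Real.sin (t - x)}
      = ENNReal.ofReal (4 * π - 2 * t) := by
  have hπ := Real.pi_pos
  rw [ge_set_eq t,
    meas_union_null (measure_mono_null Set.inter_subset_left (sin_zeros_null t)),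
    slice_gt₂ t h0 h1,
    measure_union (by rw [Set.disjoint_left]; rintro x ⟨_, h2⟩ ⟨h3, _⟩; linarith)
      measurableSet_Ioo,
    Real.volume_Ioo, Real.volume_Ioo,
    ← ENNReal.ofReal_add (p := π - (t - π)) (q := 2 * π - t) (by linarith) (by linarith)]
  congr 1; ring

private lemma le_set_eq (t : ℝ) :
    {x : ℝ | x ∈ Set.Ico (0:ℝ) (2 * π) ∧ Real.sin x * Real.sin (t - x) ≤ 0}
      = Set.Ico (0:ℝ) (2 * π)
        \ {x : ℝ | x ∈ Set.Ico (0:ℝ) (2 * π) ∧ 0 < Real.sin x * Real.sin (t - x)} := by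
  ext x
  simp only [Set.mem_setOf_eq, Set.mem_diff]
  constructor
  · rintro ⟨hx, hp⟩
    exact ⟨hx, fun h => absurd h.2 (not_lt.mpr hp)⟩
  · rintro ⟨hx, hp⟩
    refine ⟨hx, ?_⟩
    by_contra h; push_neg at h
    exact hp ⟨hx, h⟩

private lemma slice_le₁ (t : ℝ) (h0 : 0 ≤ t) (h1 : t ≤ π) :
    volume {x : ℝ | x ∈ Set.Ico (0:ℝ) (2 * π) ∧ Real.sin x * Real.sin (t - x) ≤ 0}
      = ENNReal.ofReal (2 * π - 2 * t) := by
  have hπ := Real.pi_pos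
  rw [le_set_eq t, slice_gt₁ t h0 h1]
  have hsub : Set.Ioo (0:ℝ) t ∪ Set.Ioo π (π + t) ⊆ Set.Ico (0:ℝ) (2 * π) := by
    rintro x (⟨h1', h2'⟩ | ⟨h1', h2'⟩) <;> exact ⟨by linarith, by linarith⟩
  rw [measure_diff hsub ((measurableSet_Ioo.union measurableSet_Ioo).nullMeasurableSet)
      (((measure_mono hsub).trans_lt (by rw [Real.volume_Ico]; exact ENNReal.ofReal_lt_top)).ne),
    measure_union (by rw [Set.disjoint_left]; rintro x ⟨_, h2⟩ ⟨h3, _⟩; linarith)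
      measurableSet_Ioo,
    Real.volume_Ico, Real.volume_Ioo, Real.volume_Ioo,
    ← ENNReal.ofReal_add (p := t - 0) (q := π + t - π) (by linarith) (by linarith),
    ← ENNReal.ofReal_sub (2 * π - 0) (q := (t - 0) + (π + t - π)) (by linarith)]
  congr 1; ring

private lemma slice_le₂ (t : ℝ) (h0 : π ≤ t) (h1 : t ≤ 2 * π) :
    volume {x : ℝ | x ∈ Set.Ico (0:ℝ) (2 * π) ∧ Real.sin x * Real.sin (t - x) ≤ 0}
      = ENNReal.ofReal (2 * t - 2 * π) := by
  have hπ := Real.pi_pos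
  rw [le_set_eq t, slice_gt₂ t h0 h1]
  have hsub : Set.Ioo (t - π) π ∪ Set.Ioo t (2 * π) ⊆ Set.Ico (0:ℝ) (2 * π) := by
    rintro x (⟨h1', h2'⟩ | ⟨h1', h2'⟩) <;> exact ⟨by linarith, by linarith⟩
  rw [measure_diff hsub ((measurableSet_Ioo.union measurableSet_Ioo).nullMeasurableSet)
      (((measure_mono hsub).trans_lt (by rw [Real.volume_Ico]; exact ENNReal.ofReal_lt_top)).ne),
    measure_union (by rw [Set.disjoint_left]; rintro x ⟨_, h2⟩ ⟨h3, _⟩; linarith)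
      measurableSet_Ioo,
    Real.volume_Ico, Real.volume_Ioo, Real.volume_Ioo,
    ← ENNReal.ofReal_add (p := π - (t - π)) (q := 2 * π - t) (by linarith) (by linarith),
    ← ENNReal.ofReal_sub (2 * π - 0) (q := (π - (t - π)) + (2 * π - t)) (by linarith)]
  congr 1; ring

private lemma s_eq (A y : ℝ) :
    Real.sin (y - A * π) * Real.sin (y + A * π)
      = (Real.cos (2 * (A * π)) - Real.cos (2 * y)) / 2 := by
  have h := Real.cos_sub_cos (2 * (A * π)) (2 * y)
  have e1 : (2 * (A * π) + 2 * y) / 2 = y + A * π := by ring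
  have e2 : (2 * (A * π) - 2 * y) / 2 = -(y - A * π) := by ring
  rw [e1, e2, Real.sin_neg] at h
  linear_combination (-1/2 : ℝ) * h

private lemma g_pos (A y t : ℝ)
    (ht : ∀ x : ℝ, Real.sin (2 * y - x) = Real.sin (t - x))
    (hs : 0 < Real.sin (y - A * π) * Real.sin (y + A * π)) :
    {x : ℝ | x ∈ Set.Ico (0:ℝ) (2 * π) ∧
        0 ≤ Real.sin (y - A * π) * Real.sin (y + A * π) * Real.sin x * Real.sin (2 * y - x)}
      = {x : ℝ | x ∈ Set.Ico (0:ℝ) (2 * π) ∧ 0 ≤ Real.sin x * Real.sin (t - x)} := by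
  ext x
  simp only [Set.mem_setOf_eq]
  refine and_congr_right fun _ => ?_
  rw [mul_assoc, mul_nonneg_iff_of_pos_left hs, ht x]

private lemma g_neg (A y t : ℝ)
    (ht : ∀ x : ℝ, Real.sin (2 * y - x) = Real.sin (t - x))
    (hs : Real.sin (y - A * π) * Real.sin (y + A * π) < 0) :
    {x : ℝ | x ∈ Set.Ico (0:ℝ) (2 * π) ∧
        0 ≤ Real.sin (y - A * π) * Real.sin (y + A * π) * Real.sin x * Real.sin (2 * y - x)}
      = {x : ℝ | x ∈ Set.Ico (0:ℝ) (2 * π) ∧ Real.sin x * Real.sin (t - x) ≤ 0} := by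
  ext x
  simp only [Set.mem_setOf_eq]
  refine and_congr_right fun _ => ?_
  rw [mul_assoc, ← ht x]
  constructor
  · intro hp
    by_contra hlt; push_neg at hlt
    nlinarith [mul_pos (neg_pos.mpr hs) hlt]
  · intro hp
    nlinarith [mul_nonneg (le_of_lt (neg_pos.mpr hs)) (neg_nonneg.mpr hp)]

private lemma lin_integral (p q a b : ℝ) :
    ∫ y in a..b, (p + q * y) = p * (b - a) + q * ((b ^ 2 - a ^ 2) / 2) := by
  have h2 : IntervalIntegrable (fun y : ℝ => q * y) volume a b :=
    (by fun_prop : Continuous fun y : ℝ => q * y).intervalIntegrable a b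
  rw [intervalIntegral.integral_add intervalIntegrable_const h2,
    intervalIntegral.integral_const, intervalIntegral.integral_const_mul, integral_id,
    smul_eq_mul]
  ring

private lemma piece_eval (g : ℝ → ENNReal) (a b p q r : ℝ) (hab : a ≤ b)
    (hg : ∀ y ∈ Set.Ioo a b, g y = ENNReal.ofReal (p + q * y))
    (hnn : ∀ y ∈ Set.Ioo a b, 0 ≤ p + q * y)
    (hr : p * (b - a) + q * ((b ^ 2 - a ^ 2) / 2) = r) :
    ∫⁻ y in Set.Ico a b, g y = ENNReal.ofReal r := by
  have hcont : Continuous fun y : ℝ => p + q * y := by fun_prop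
  have hint : IntegrableOn (fun y : ℝ => p + q * y) (Set.Ioo a b) volume :=
    (hcont.integrableOn_Icc).mono_set Set.Ioo_subset_Icc_self
  have hpos : 0 ≤ᶠ[ae (volume.restrict (Set.Ioo a b))] fun y : ℝ => p + q * y := by
    filter_upwards [ae_restrict_mem measurableSet_Ioo] with y hy using hnn y hy
  calc ∫⁻ y in Set.Ico a b, g y
      = ∫⁻ y in Set.Ioo a b, g y := (setLIntegral_congr MeasureTheory.Ioo_ae_eq_Ico).symm
    _ = ∫⁻ y in Set.Ioo a b, ENNReal.ofReal (p + q * y) :=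
        setLIntegral_congr_fun measurableSet_Ioo (fun y hy => hg y hy)
    _ = ENNReal.ofReal (∫ y in Set.Ioo a b, (p + q * y)) :=
        (ofReal_integral_eq_lintegral_ofReal hint hpos).symm
    _ = ENNReal.ofReal r := by
        rw [← integral_Ioc_eq_integral_Ioo, ← intervalIntegral.integral_of_le hab,
          lin_integral, hr]

private lemma split2 (f : ℝ → ENNReal) (a b c : ℝ) (hab : a ≤ b) (hbc : b ≤ c) :
    ∫⁻ y in Set.Ico a c, f y
      = (∫⁻ y in Set.Ico a b, f y) + ∫⁻ y in Set.Ico b c, f y := by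
  rw [← Set.Ico_union_Ico_eq_Ico hab hbc,
    lintegral_union measurableSet_Ico Set.Ico_disjoint_Ico_same]

private lemma ofReal_sum8 (u v w : ℝ) (hu : 0 ≤ u) (hv : 0 ≤ v)
    (h : u + (v + (v + (u + (u + (v + (v + u)))))) = w) :
    ENNReal.ofReal u + (ENNReal.ofReal v + (ENNReal.ofReal v + (ENNReal.ofReal u
      + (ENNReal.ofReal u + (ENNReal.ofReal v + (ENNReal.ofReal v + ENNReal.ofReal u))))))
      = ENNReal.ofReal w := by
  rw [← h, ENNReal.ofReal_add hu (by linarith), ENNReal.ofReal_add hv (by linarith),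
    ENNReal.ofReal_add hv (by linarith), ENNReal.ofReal_add hu (by linarith),
    ENNReal.ofReal_add hu (by linarith), ENNReal.ofReal_add hv (by linarith),
    ENNReal.ofReal_add hv hu]

set_option maxHeartbeats 2000000 in
theorem stmt_13 (A A' : ℝ) (hA' : A' ∈ Set.Ico (0 : ℝ) (1 / 2))
    (hmod : ∃ m : ℤ, A - A' = m * (1 / 2)) :
    volume {p : ℝ × ℝ | p.1 ∈ Set.Ico (0 : ℝ) (2 * π) ∧ p.2 ∈ Set.Ico (0 : ℝ) (2 * π) ∧
        0 ≤ Real.sin (p.2 - A * π) * Real.sin (p.2 + A * π) * Real.sin p.1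
          * Real.sin (2 * p.2 - p.1)}
      = ENNReal.ofReal (4 * π ^ 2 * (1 / 2 + 2 * A' - 4 * A' ^ 2)) := by
  obtain ⟨hA'0, hA'1⟩ := hA'
  obtain ⟨m, hm⟩ := hmod
  have hπ := Real.pi_pos
  obtain ⟨B, hB0, hB1, hc, hval⟩ :
      ∃ B : ℝ, 0 ≤ B ∧ B ≤ 1 / 2 ∧ Real.cos (2 * (A * π)) = Real.cos (2 * (B * π)) ∧
        1 / 2 + 2 * A' - 4 * A' ^ 2 = 1 / 2 + 2 * B - 4 * B ^ 2 := by
    rcases Int.even_or_odd m with ⟨k, hk⟩ | ⟨k, hk⟩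
    · refine ⟨A', hA'0, le_of_lt hA'1, ?_, rfl⟩
      have hA : A = A' + (k : ℝ) := by
        rw [hk] at hm; push_cast at hm; linarith
      have e : 2 * (A * π) = 2 * (A' * π) + (k : ℝ) * (2 * π) := by rw [hA]; ring
      rw [e, Real.cos_add_int_mul_two_pi]
    · refine ⟨1 / 2 - A', by linarith, by linarith, ?_, by ring⟩
      have hA : A = A' + 1 / 2 + (k : ℝ) := by
        rw [hk] at hm; push_cast at hm; linarith
      have e : 2 * (A * π) = (2 * (A' * π) + π) + (k : ℝ) * (2 * π) := by rw [hA]; ring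
      rw [e, Real.cos_add_int_mul_two_pi, Real.cos_add_pi,
        show 2 * ((1 / 2 - A') * π) = π - 2 * (A' * π) by ring, Real.cos_pi_sub]
  have hbnn : 0 ≤ B * π := mul_nonneg hB0 (le_of_lt hπ)
  have hb2 : B * π ≤ π / 2 := by nlinarith
  set r1 : ℝ := 2 * B * π ^ 2 - 2 * B ^ 2 * π ^ 2 with hr1
  set r2 : ℝ := π ^ 2 / 2 - 2 * B ^ 2 * π ^ 2 with hr2
  have hBB : B ^ 2 ≤ B := by nlinarith
  have r1nn : 0 ≤ r1 := by
    rw [hr1]; nlinarith [mul_le_mul_of_nonneg_right hBB (sq_nonneg π)]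
  have r2nn : 0 ≤ r2 := by
    rw [hr2]; nlinarith [mul_le_mul_of_nonneg_right
      (show B ^ 2 ≤ (1/2 : ℝ) * (1/2) by nlinarith) (sq_nonneg π)]
  -- the eight pieces
  have hp1 : (∫⁻ y in Set.Ico (0:ℝ) (B * π), volume {x : ℝ | x ∈ Set.Ico (0:ℝ) (2 * π) ∧
      0 ≤ Real.sin (y - A * π) * Real.sin (y + A * π) * Real.sin x * Real.sin (2 * y - x)})
      = ENNReal.ofReal r1 := by
    refine piece_eval _ _ _ (2 * π) (-4) _ hbnn ?_ ?_ (by rw [hr1]; ring)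
    · intro y hy
      obtain ⟨hy1, hy2⟩ := hy
      have hcos : Real.cos (2 * (B * π)) < Real.cos (2 * y) :=
        Real.cos_lt_cos_of_nonneg_of_le_pi (by linarith) (by linarith) (by linarith)
      have hs : Real.sin (y - A * π) * Real.sin (y + A * π) < 0 := by
        rw [s_eq, hc]; linarith
      rw [g_neg A y (2 * y) (fun x => rfl) hs,
        slice_le₁ (2 * y) (by linarith) (by linarith)]
      congr 1; ring
    · intro y hy
      obtain ⟨hy1, hy2⟩ := hy
      linarith
  have hp2 : (∫⁻ y in Set.Ico (B * π) (π / 2), volume {x : ℝ | x ∈ Set.Ico (0:ℝ) (2 * π) ∧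
      0 ≤ Real.sin (y - A * π) * Real.sin (y + A * π) * Real.sin x * Real.sin (2 * y - x)})
      = ENNReal.ofReal r2 := by
    refine piece_eval _ _ _ 0 4 _ hb2 ?_ ?_ (by rw [hr2]; ring)
    · intro y hy
      obtain ⟨hy1, hy2⟩ := hy
      have hcos : Real.cos (2 * y) < Real.cos (2 * (B * π)) :=
        Real.cos_lt_cos_of_nonneg_of_le_pi (by linarith) (by linarith) (by linarith)
      have hs : 0 < Real.sin (y - A * π) * Real.sin (y + A * π) := by
        rw [s_eq, hc]; linarith
      rw [g_pos A y (2 * y) (fun x => rfl) hs,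
        slice_ge₁ (2 * y) (by linarith) (by linarith)]
      congr 1; ring
    · intro y hy
      obtain ⟨hy1, hy2⟩ := hy
      linarith
  have hp3 : (∫⁻ y in Set.Ico (π / 2) (π - B * π), volume {x : ℝ | x ∈ Set.Ico (0:ℝ) (2 * π) ∧
      0 ≤ Real.sin (y - A * π) * Real.sin (y + A * π) * Real.sin x * Real.sin (2 * y - x)})
      = ENNReal.ofReal r2 := by
    refine piece_eval _ _ _ (4 * π) (-4) _ (by linarith) ?_ ?_ (by rw [hr2]; ring)
    · intro y hy
      obtain ⟨hy1, hy2⟩ := hy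
      have hcos : Real.cos (2 * y) < Real.cos (2 * (B * π)) := by
        rw [← Real.cos_two_pi_sub (2 * y)]
        exact Real.cos_lt_cos_of_nonneg_of_le_pi (by linarith) (by linarith) (by linarith)
      have hs : 0 < Real.sin (y - A * π) * Real.sin (y + A * π) := by
        rw [s_eq, hc]; linarith
      rw [g_pos A y (2 * y) (fun x => rfl) hs,
        slice_ge₂ (2 * y) (by linarith) (by linarith)]
      congr 1; ring
    · intro y hy
      obtain ⟨hy1, hy2⟩ := hy
      linarith
  have hp4 : (∫⁻ y in Set.Ico (π - B * π) π, volume {x : ℝ | x ∈ Set.Ico (0:ℝ) (2 * π) ∧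
      0 ≤ Real.sin (y - A * π) * Real.sin (y + A * π) * Real.sin x * Real.sin (2 * y - x)})
      = ENNReal.ofReal r1 := by
    refine piece_eval _ _ _ (-2 * π) 4 _ (by linarith) ?_ ?_ (by rw [hr1]; ring)
    · intro y hy
      obtain ⟨hy1, hy2⟩ := hy
      have hcos : Real.cos (2 * (B * π)) < Real.cos (2 * y) := by
        rw [← Real.cos_two_pi_sub (2 * y)]
        exact Real.cos_lt_cos_of_nonneg_of_le_pi (by linarith) (by linarith) (by linarith)
      have hs : Real.sin (y - A * π) * Real.sin (y + A * π) < 0 := by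
        rw [s_eq, hc]; linarith
      rw [g_neg A y (2 * y) (fun x => rfl) hs,
        slice_le₂ (2 * y) (by linarith) (by linarith)]
      congr 1; ring
    · intro y hy
      obtain ⟨hy1, hy2⟩ := hy
      linarith
  have hshift : ∀ y : ℝ, ∀ x : ℝ, Real.sin (2 * y - x) = Real.sin (2 * y - 2 * π - x) := by
    intro y x
    rw [show 2 * y - 2 * π - x = (2 * y - x) - 2 * π by ring, Real.sin_sub_two_pi]
  have hcshift : ∀ y : ℝ, Real.cos (2 * y) = Real.cos (2 * y - 2 * π) :=
    fun y => (Real.cos_sub_two_pi (2 * y)).symm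
  have hp5 : (∫⁻ y in Set.Ico π (π + B * π), volume {x : ℝ | x ∈ Set.Ico (0:ℝ) (2 * π) ∧
      0 ≤ Real.sin (y - A * π) * Real.sin (y + A * π) * Real.sin x * Real.sin (2 * y - x)})
      = ENNReal.ofReal r1 := by
    refine piece_eval _ _ _ (6 * π) (-4) _ (by linarith) ?_ ?_ (by rw [hr1]; ring)
    · intro y hy
      obtain ⟨hy1, hy2⟩ := hy
      have hcos : Real.cos (2 * (B * π)) < Real.cos (2 * y) := by
        rw [hcshift y]
        exact Real.cos_lt_cos_of_nonneg_of_le_pi (by linarith) (by linarith) (by linarith)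
      have hs : Real.sin (y - A * π) * Real.sin (y + A * π) < 0 := by
        rw [s_eq, hc]; linarith
      rw [g_neg A y (2 * y - 2 * π) (hshift y) hs,
        slice_le₁ (2 * y - 2 * π) (by linarith) (by linarith)]
      congr 1; ring
    · intro y hy
      obtain ⟨hy1, hy2⟩ := hy
      linarith
  have hp6 : (∫⁻ y in Set.Ico (π + B * π) (3 * π / 2), volume {x : ℝ | x ∈ Set.Ico (0:ℝ) (2 * π) ∧
      0 ≤ Real.sin (y - A * π) * Real.sin (y + A * π) * Real.sin x * Real.sin (2 * y - x)})
      = ENNReal.ofReal r2 := by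
    refine piece_eval _ _ _ (-4 * π) 4 _ (by linarith) ?_ ?_ (by rw [hr2]; ring)
    · intro y hy
      obtain ⟨hy1, hy2⟩ := hy
      have hcos : Real.cos (2 * y) < Real.cos (2 * (B * π)) := by
        rw [hcshift y]
        exact Real.cos_lt_cos_of_nonneg_of_le_pi (by linarith) (by linarith) (by linarith)
      have hs : 0 < Real.sin (y - A * π) * Real.sin (y + A * π) := by
        rw [s_eq, hc]; linarith
      rw [g_pos A y (2 * y - 2 * π) (hshift y) hs,
        slice_ge₁ (2 * y - 2 * π) (by linarith) (by linarith)]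
      congr 1; ring
    · intro y hy
      obtain ⟨hy1, hy2⟩ := hy
      linarith
  have hp7 : (∫⁻ y in Set.Ico (3 * π / 2) (2 * π - B * π), volume {x : ℝ | x ∈ Set.Ico (0:ℝ) (2 * π) ∧
      0 ≤ Real.sin (y - A * π) * Real.sin (y + A * π) * Real.sin x * Real.sin (2 * y - x)})
      = ENNReal.ofReal r2 := by
    refine piece_eval _ _ _ (8 * π) (-4) _ (by linarith) ?_ ?_ (by rw [hr2]; ring)
    · intro y hy
      obtain ⟨hy1, hy2⟩ := hy
      have hcos : Real.cos (2 * y) < Real.cos (2 * (B * π)) := by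
        rw [hcshift y, ← Real.cos_two_pi_sub (2 * y - 2 * π)]
        exact Real.cos_lt_cos_of_nonneg_of_le_pi (by linarith) (by linarith) (by linarith)
      have hs : 0 < Real.sin (y - A * π) * Real.sin (y + A * π) := by
        rw [s_eq, hc]; linarith
      rw [g_pos A y (2 * y - 2 * π) (hshift y) hs,
        slice_ge₂ (2 * y - 2 * π) (by linarith) (by linarith)]
      congr 1; ring
    · intro y hy
      obtain ⟨hy1, hy2⟩ := hy
      linarith
  have hp8 : (∫⁻ y in Set.Ico (2 * π - B * π) (2 * π), volume {x : ℝ | x ∈ Set.Ico (0:ℝ) (2 * π) ∧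
      0 ≤ Real.sin (y - A * π) * Real.sin (y + A * π) * Real.sin x * Real.sin (2 * y - x)})
      = ENNReal.ofReal r1 := by
    refine piece_eval _ _ _ (-6 * π) 4 _ (by linarith) ?_ ?_ (by rw [hr1]; ring)
    · intro y hy
      obtain ⟨hy1, hy2⟩ := hy
      have hcos : Real.cos (2 * (B * π)) < Real.cos (2 * y) := by
        rw [hcshift y, ← Real.cos_two_pi_sub (2 * y - 2 * π)]
        exact Real.cos_lt_cos_of_nonneg_of_le_pi (by linarith) (by linarith) (by linarith)
      have hs : Real.sin (y - A * π) * Real.sin (y + A * π) < 0 := by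
        rw [s_eq, hc]; linarith
      rw [g_neg A y (2 * y - 2 * π) (hshift y) hs,
        slice_le₂ (2 * y - 2 * π) (by linarith) (by linarith)]
      congr 1; ring
    · intro y hy
      obtain ⟨hy1, hy2⟩ := hy
      linarith
  -- Fubini
  have hcont : Continuous (fun p : ℝ × ℝ =>
      Real.sin (p.2 - A * π) * Real.sin (p.2 + A * π) * Real.sin p.1
        * Real.sin (2 * p.2 - p.1)) := by fun_prop
  have hSm : MeasurableSet {p : ℝ × ℝ | p.1 ∈ Set.Ico (0 : ℝ) (2 * π) ∧
      p.2 ∈ Set.Ico (0 : ℝ) (2 * π) ∧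
      0 ≤ Real.sin (p.2 - A * π) * Real.sin (p.2 + A * π) * Real.sin p.1
        * Real.sin (2 * p.2 - p.1)} := by
    have he : {p : ℝ × ℝ | p.1 ∈ Set.Ico (0 : ℝ) (2 * π) ∧
        p.2 ∈ Set.Ico (0 : ℝ) (2 * π) ∧
        0 ≤ Real.sin (p.2 - A * π) * Real.sin (p.2 + A * π) * Real.sin p.1
          * Real.sin (2 * p.2 - p.1)}
        = (Prod.fst ⁻¹' Set.Ico (0 : ℝ) (2 * π)) ∩ ((Prod.snd ⁻¹' Set.Ico (0 : ℝ) (2 * π))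
          ∩ {p : ℝ × ℝ | 0 ≤ Real.sin (p.2 - A * π) * Real.sin (p.2 + A * π) * Real.sin p.1
              * Real.sin (2 * p.2 - p.1)}) := rfl
    rw [he]
    exact (measurable_fst measurableSet_Ico).inter
      ((measurable_snd measurableSet_Ico).inter
        (measurableSet_le measurable_const hcont.measurable))
  rw [Measure.volume_eq_prod ℝ ℝ, Measure.prod_apply_symm hSm]
  have hpt : ∀ y : ℝ, volume ((fun x : ℝ => (x, y)) ⁻¹' {p : ℝ × ℝ |
      p.1 ∈ Set.Ico (0 : ℝ) (2 * π) ∧ p.2 ∈ Set.Ico (0 : ℝ) (2 * π) ∧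
      0 ≤ Real.sin (p.2 - A * π) * Real.sin (p.2 + A * π) * Real.sin p.1
        * Real.sin (2 * p.2 - p.1)})
      = Set.indicator (Set.Ico (0 : ℝ) (2 * π)) (fun y => volume {x : ℝ |
          x ∈ Set.Ico (0:ℝ) (2 * π) ∧
          0 ≤ Real.sin (y - A * π) * Real.sin (y + A * π) * Real.sin x
            * Real.sin (2 * y - x)}) y := by
    intro y
    by_cases hy : y ∈ Set.Ico (0 : ℝ) (2 * π)
    · rw [Set.indicator_of_mem hy]
      congr 1
      ext x
      simp only [Set.mem_preimage, Set.mem_setOf_eq]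
      tauto
    · rw [Set.indicator_of_notMem hy]
      have he : ((fun x : ℝ => (x, y)) ⁻¹' {p : ℝ × ℝ |
          p.1 ∈ Set.Ico (0 : ℝ) (2 * π) ∧ p.2 ∈ Set.Ico (0 : ℝ) (2 * π) ∧
          0 ≤ Real.sin (p.2 - A * π) * Real.sin (p.2 + A * π) * Real.sin p.1
            * Real.sin (2 * p.2 - p.1)}) = ∅ := by
        ext x
        simp only [Set.mem_preimage, Set.mem_setOf_eq, Set.mem_empty_iff_false, iff_false]
        rintro ⟨_, h2, _⟩
        exact hy h2
      rw [he, measure_empty]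
  rw [lintegral_congr hpt, lintegral_indicator measurableSet_Ico]
  rw [split2 _ 0 (B * π) (2 * π) hbnn (by linarith),
    split2 _ (B * π) (π / 2) (2 * π) hb2 (by linarith),
    split2 _ (π / 2) (π - B * π) (2 * π) (by linarith) (by linarith),
    split2 _ (π - B * π) π (2 * π) (by linarith) (by linarith),
    split2 _ π (π + B * π) (2 * π) (by linarith) (by linarith),
    split2 _ (π + B * π) (3 * π / 2) (2 * π) (by linarith) (by linarith),
    split2 _ (3 * π / 2) (2 * π - B * π) (2 * π) (by linarith) (by linarith)]
  rw [hp1, hp2, hp3, hp4, hp5, hp6, hp7, hp8, hval]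
  exact ofReal_sum8 r1 r2 _ r1nn r2nn (by rw [hr1, hr2]; ring)
end

section
/- For every A ∈ ℝ, the two-dimensional Lebesgue measure of the set { (x,y) ∈ [0,2π)×[0,2π) : sin²(2y) − (sin(x+2y) − cos(2Aπ)·sin(x))² ≥ 0 } equals 2π²; in particular the measure is independent of A. -/
open Real MeasureTheory

lemma countable_cos_eq (a : ℝ) : Set.Countable {v : ℝ | Real.cos v = a} := by
  have hsub : {v : ℝ | Real.cos v = a} ⊆
      ⋃ k : ℤ, Set.Icc ((k:ℝ)*π) ((k:ℝ)*π+π) ∩ {v : ℝ | Real.cos v = a} := by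
    intro v hv
    refine Set.mem_iUnion.2 ⟨⌊v/π⌋, ⟨?_, ?_⟩, hv⟩
    · have h := Int.floor_le (v/π)
      have := pi_pos
      calc ((⌊v/π⌋:ℝ))*π ≤ (v/π)*π := by nlinarith
        _ = v := by field_simp
    · have h := Int.lt_floor_add_one (v/π)
      have := pi_pos
      have : v/π*π < ((⌊v/π⌋:ℝ)+1)*π := by nlinarith
      calc v = v/π*π := by field_simp
        _ ≤ ((⌊v/π⌋:ℝ)+1)*π := this.le
        _ = (⌊v/π⌋:ℝ)*π + π := by ring
  refine Set.Countable.mono hsub (Set.countable_iUnion fun k => ?_)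
  apply Set.Subsingleton.countable
  rintro v ⟨⟨hv1, hv2⟩, hv3⟩ w ⟨⟨hw1, hw2⟩, hw3⟩
  rcases Int.even_or_odd k with ⟨m, hm⟩ | ⟨m, hm⟩
  · -- k = m + m : cos (v - m*(2π)) = cos v
    have hc : ∀ u : ℝ, (k:ℝ)*π ≤ u → u ≤ (k:ℝ)*π + π → u - (m:ℝ)*(2*π) ∈ Set.Icc 0 π := by
      intro u h1 h2
      have hk : (k:ℝ) = 2*(m:ℝ) := by rw [hm]; push_cast; ring
      constructor <;> [linarith [hk ▸ h1]; linarith [hk ▸ h2]]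
    have key : ∀ u : ℝ, Real.cos (u - (m:ℝ)*(2*π)) = Real.cos u := by
      intro u
      rw [← Real.cos_neg, neg_sub]
      exact Real.cos_int_mul_two_pi_sub u m
    have := Real.injOn_cos (hc v hv1 hv2) (hc w hw1 hw2)
      (by rw [key, key, hv3, hw3])
    linarith [this]
  · -- k = 2m+1 : cos ((m+1)*(2π) - v) = cos v
    have hc : ∀ u : ℝ, (k:ℝ)*π ≤ u → u ≤ (k:ℝ)*π + π → ((m:ℝ)+1)*(2*π) - u ∈ Set.Icc 0 π := by
      intro u h1 h2
      have hk : (k:ℝ) = 2*(m:ℝ)+1 := by rw [hm]; push_cast; ring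
      constructor <;> [linarith [hk ▸ h2]; linarith [hk ▸ h1]]
    have key : ∀ u : ℝ, Real.cos (((m:ℝ)+1)*(2*π) - u) = Real.cos u := by
      intro u
      have := Real.cos_int_mul_two_pi_sub u (m+1)
      push_cast at this ⊢
      convert this using 2
    have := Real.injOn_cos (hc v hv1 hv2) (hc w hw1 hw2)
      (by rw [key, key, hv3, hw3])
    linarith [this]

lemma countable_sin_eq (b : ℝ) : Set.Countable {v : ℝ | Real.sin v = b} := by
  have : {v : ℝ | Real.sin v = b} = (fun v : ℝ => π/2 - v) ⁻¹' {w : ℝ | Real.cos w = b} := by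
    ext v
    simp [Real.cos_pi_div_two_sub]
  rw [this]
  exact (countable_cos_eq b).preimage (fun p q h => by have h2 : π/2 - p = π/2 - q := h; linarith)

lemma core (a b : ℝ) (hab : a^2 + b^2 ≤ 1) :
    volume ({v : ℝ | 0 ≤ (a - Real.cos v) * (Real.sin v - b)}
        ∩ Set.Ico (Real.arcsin b) (Real.arcsin b + 2*π)) = ENNReal.ofReal π ∧
    volume ({v : ℝ | (a - Real.cos v) * (Real.sin v - b) ≤ 0}
        ∩ Set.Ico (Real.arcsin b) (Real.arcsin b + 2*π)) = ENNReal.ofReal π := by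
  have hπ := pi_pos
  have ha1 : -1 ≤ a := by nlinarith
  have ha2 : a ≤ 1 := by nlinarith
  have hb1 : -1 ≤ b := by nlinarith
  have hb2 : b ≤ 1 := by nlinarith
  set α := Real.arccos a with hαdef
  set β := Real.arcsin b with hβdef
  have hα0 : 0 ≤ α := Real.arccos_nonneg a
  have hαπ : α ≤ π := Real.arccos_le_pi a
  have hβm : β ∈ Set.Icc (-(π/2)) (π/2) := Real.arcsin_mem_Icc b
  have hβ1 : -(π/2) ≤ β := hβm.1
  have hβ2 : β ≤ π/2 := hβm.2
  have hcosα : Real.cos α = a := Real.cos_arccos ha1 ha2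
  have hsinβ : Real.sin β = b := Real.sin_arcsin hb1 hb2
  -- sin |β| ≤ sin α
  have hsinabs : Real.sin |β| ≤ Real.sin α := by
    have h1 : Real.sin |β| = |b| := by
      rcases abs_cases β with ⟨h, _⟩ | ⟨h, hneg⟩
      · rw [h, hsinβ]
        rcases abs_cases b with ⟨hb, _⟩ | ⟨hb, hbneg⟩
        · rw [hb]
        · rw [hb]
          have : Real.sin β ≤ 0 := by
            rw [hsinβ]; linarith
          -- b ≤ 0 and |β| = β means β ≥ 0 so sin β ≥ 0; then b = 0
          have hβnn : 0 ≤ β := by rw [← h]; exact abs_nonneg β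
          have : 0 ≤ Real.sin β := Real.sin_nonneg_of_nonneg_of_le_pi hβnn (by linarith)
          rw [hsinβ] at this
          linarith
      · rw [h, Real.sin_neg, hsinβ]
        rcases abs_cases b with ⟨hb, hbnn⟩ | ⟨hb, _⟩
        ·
          have : Real.sin β ≤ 0 := by
            have : -π ≤ β := by linarith
            exact Real.sin_nonpos_of_nonpos_of_neg_pi_le (by linarith) this
          rw [hsinβ] at this
          rw [hb]; linarith
        · rw [hb]
    have h2 : Real.sin α = Real.sqrt (1 - a^2) := Real.sin_arccos a
    rw [h1, h2]
    have : |b| = Real.sqrt (b^2) := (Real.sqrt_sq_eq_abs b).symm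
    rw [this]
    exact Real.sqrt_le_sqrt (by nlinarith)
  have habs0 : 0 ≤ |β| := abs_nonneg β
  have habs2 : |β| ≤ π/2 := abs_le.2 ⟨hβ1, hβ2⟩
  have hγα : |β| ≤ α := by
    by_contra h
    push_neg at h
    have := Real.strictMonoOn_sin (Set.mem_Icc.2 ⟨by linarith, by linarith⟩)
      (Set.mem_Icc.2 ⟨by linarith, habs2⟩) h
    linarith
  have hγπ : α ≤ π - |β| := by
    by_contra h
    push_neg at h
    have hsinπα : Real.sin (π - α) = Real.sin α := Real.sin_pi_sub α
    have := Real.strictMonoOn_sin (Set.mem_Icc.2 ⟨by linarith, by linarith⟩)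
      (Set.mem_Icc.2 ⟨by linarith, habs2⟩) (by linarith : π - α < |β|)
    rw [hsinπα] at this
    linarith
  have hβα : β ≤ α := le_trans (le_abs_self β) hγα
  have hmβα : -α ≤ β := by have := neg_abs_le β; linarith
  have hαπβ : α ≤ π - β := by have := le_abs_self β; linarith
  have hαπβ' : α ≤ π + β := by have := neg_abs_le β; linarith
  -- monotonicity helpers
  have Hcosle : ∀ v : ℝ, α ≤ v → v ≤ 2*π - α → Real.cos v ≤ a := by
    intro v h1 h2
    rcases le_or_gt v π with h | h
    · rw [← hcosα]
      exact Real.cos_le_cos_of_nonneg_of_le_pi hα0 h h1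
    · have hv : Real.cos v = Real.cos (2*π - v) := by
        rw [← Real.cos_neg (2*π - v), neg_sub, Real.cos_sub_two_pi]
      rw [hv, ← hcosα]
      exact Real.cos_le_cos_of_nonneg_of_le_pi hα0 (by linarith) (by linarith)
  have Hcosge : ∀ v : ℝ, -α ≤ v → v ≤ α → a ≤ Real.cos v := by
    intro v h1 h2
    rw [← Real.cos_abs v, ← hcosα]
    exact Real.cos_le_cos_of_nonneg_of_le_pi (abs_nonneg v) hαπ (abs_le.2 ⟨h1, h2⟩)
  have Hsinge : ∀ v : ℝ, β ≤ v → v ≤ π - β → b ≤ Real.sin v := by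
    intro v h1 h2
    rcases le_or_gt v (π/2) with h | h
    · rw [← hsinβ]
      exact Real.strictMonoOn_sin.monotoneOn (Set.mem_Icc.2 ⟨hβ1, hβ2⟩)
        (Set.mem_Icc.2 ⟨by linarith, h⟩) h1
    · have hv : Real.sin v = Real.sin (π - v) := (Real.sin_pi_sub v).symm
      rw [hv, ← hsinβ]
      exact Real.strictMonoOn_sin.monotoneOn (Set.mem_Icc.2 ⟨hβ1, hβ2⟩)
        (Set.mem_Icc.2 ⟨by linarith, by linarith⟩) (by linarith)
  have Hsinle : ∀ v : ℝ, π - β ≤ v → v ≤ 2*π + β → Real.sin v ≤ b := by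
    intro v h1 h2
    rcases le_or_gt v (3*π/2) with h | h
    · have hv : Real.sin v = Real.sin (π - v) := (Real.sin_pi_sub v).symm
      rw [hv, ← hsinβ]
      exact Real.strictMonoOn_sin.monotoneOn (Set.mem_Icc.2 ⟨by linarith, by linarith⟩)
        (Set.mem_Icc.2 ⟨hβ1, hβ2⟩) (by linarith)
    · have hv : Real.sin v = Real.sin (v - 2*π) := (Real.sin_sub_two_pi v).symm
      rw [hv, ← hsinβ]
      exact Real.strictMonoOn_sin.monotoneOn (Set.mem_Icc.2 ⟨by linarith, by linarith⟩)
        (Set.mem_Icc.2 ⟨hβ1, hβ2⟩) (by linarith)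
  -- the sets
  set G : Set ℝ := {v : ℝ | 0 ≤ (a - Real.cos v) * (Real.sin v - b)} with hGdef
  set G' : Set ℝ := {v : ℝ | (a - Real.cos v) * (Real.sin v - b) ≤ 0} with hG'def
  set D : Set ℝ := Set.Ico β (β + 2*π) with hDdef
  have hGm : MeasurableSet G :=
    (isClosed_le continuous_const
      ((continuous_const.sub Real.continuous_cos).mul
        (Real.continuous_sin.sub continuous_const))).measurableSet
  have hG'm : MeasurableSet G' :=
    (isClosed_le ((continuous_const.sub Real.continuous_cos).mul
        (Real.continuous_sin.sub continuous_const)) continuous_const).measurableSet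
  -- subset inclusions
  have hMA : Set.Ico α (π - β) ∪ Set.Ico (2*π - α) (2*π + β) ⊆ G ∩ D := by
    rintro v (⟨h1, h2⟩ | ⟨h1, h2⟩)
    · refine ⟨?_, ⟨by linarith, by linarith⟩⟩
      have hc := Hcosle v h1 (by linarith)
      have hs := Hsinge v (by linarith) h2.le
      have h3 : 0 ≤ a - Real.cos v := by linarith
      have h4 : 0 ≤ Real.sin v - b := by linarith
      show 0 ≤ (a - Real.cos v) * (Real.sin v - b)
      exact mul_nonneg h3 h4
    · refine ⟨?_, ⟨by linarith, by linarith⟩⟩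
      have hceq : Real.cos v = Real.cos (v - 2*π) := (Real.cos_sub_two_pi v).symm
      have hc : a ≤ Real.cos v := by
        rw [hceq]; exact Hcosge (v - 2*π) (by linarith) (by linarith)
      have hs := Hsinle v (by linarith) (by linarith)
      have h3 : a - Real.cos v ≤ 0 := by linarith
      have h4 : Real.sin v - b ≤ 0 := by linarith
      show 0 ≤ (a - Real.cos v) * (Real.sin v - b)
      nlinarith [mul_nonneg (neg_nonneg.2 h3) (neg_nonneg.2 h4)]
  have hMB : Set.Ico β α ∪ Set.Ico (π - β) (2*π - α) ⊆ G' ∩ D := by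
    rintro v (⟨h1, h2⟩ | ⟨h1, h2⟩)
    · refine ⟨?_, ⟨by linarith, by linarith⟩⟩
      have hc := Hcosge v (by linarith) h2.le
      have hs := Hsinge v h1 (by linarith)
      have h3 : a - Real.cos v ≤ 0 := by linarith
      have h4 : 0 ≤ Real.sin v - b := by linarith
      show (a - Real.cos v) * (Real.sin v - b) ≤ 0
      exact mul_nonpos_of_nonpos_of_nonneg h3 h4
    · refine ⟨?_, ⟨by linarith, by linarith⟩⟩
      have hc := Hcosle v (by linarith) (by linarith)
      have hs := Hsinle v h1 (by linarith)
      have h3 : 0 ≤ a - Real.cos v := by linarith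
      have h4 : Real.sin v - b ≤ 0 := by linarith
      show (a - Real.cos v) * (Real.sin v - b) ≤ 0
      exact mul_nonpos_of_nonneg_of_nonpos h3 h4
  -- volumes of the unions
  have hvolMA : volume (Set.Ico α (π - β) ∪ Set.Ico (2*π - α) (2*π + β)) = ENNReal.ofReal π := by
    rw [measure_union ?_ measurableSet_Ico]
    · rw [Real.volume_Ico, Real.volume_Ico, ← ENNReal.ofReal_add (by linarith) (by linarith)]
      congr 1; ring
    · rw [Set.disjoint_left]
      rintro v ⟨_, h2⟩ ⟨h3, _⟩
      linarith
  have hvolMB : volume (Set.Ico β α ∪ Set.Ico (π - β) (2*π - α)) = ENNReal.ofReal π := by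
    rw [measure_union ?_ measurableSet_Ico]
    · rw [Real.volume_Ico, Real.volume_Ico, ← ENNReal.ofReal_add (by linarith) (by linarith)]
      congr 1; ring
    · rw [Set.disjoint_left]
      rintro v ⟨_, h2⟩ ⟨h3, _⟩
      linarith
  have hAge : ENNReal.ofReal π ≤ volume (G ∩ D) := hvolMA ▸ measure_mono hMA
  have hBge : ENNReal.ofReal π ≤ volume (G' ∩ D) := hvolMB ▸ measure_mono hMB
  -- union is D, intersection is null
  have hcup : (G ∩ D) ∪ (G' ∩ D) = D := by
    ext v
    constructor
    · rintro (⟨_, h⟩ | ⟨_, h⟩) <;> exact h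
    · intro hv
      rcases le_total 0 ((a - Real.cos v) * (Real.sin v - b)) with h | h
      · exact Or.inl ⟨h, hv⟩
      · exact Or.inr ⟨h, hv⟩
  have hcap : volume ((G ∩ D) ∩ (G' ∩ D)) = 0 := by
    have hz : volume ({v : ℝ | Real.cos v = a} ∪ {v : ℝ | Real.sin v = b}) = 0 :=
      measure_union_null ((countable_cos_eq a).measure_zero _)
        ((countable_sin_eq b).measure_zero _)
    refine measure_mono_null ?_ hz
    rintro v ⟨⟨h1, _⟩, ⟨h2, _⟩⟩
    have h0 : (a - Real.cos v) * (Real.sin v - b) = 0 := le_antisymm h2 h1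
    rcases mul_eq_zero.1 h0 with h | h
    · exact Or.inl (by simp only [Set.mem_setOf_eq]; linarith)
    · exact Or.inr (by simp only [Set.mem_setOf_eq]; linarith)
  have hsum : volume (G ∩ D) + volume (G' ∩ D) = ENNReal.ofReal π + ENNReal.ofReal π := by
    rw [← measure_union_add_inter (G ∩ D) (hG'm.inter measurableSet_Ico), hcup, hcap, add_zero,
      ← ENNReal.ofReal_add hπ.le hπ.le]
    rw [hDdef, Real.volume_Ico]
    congr 1; ring
  have hne : ENNReal.ofReal π ≠ ⊤ := ENNReal.ofReal_ne_top
  constructor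
  · refine le_antisymm ?_ hAge
    have h1 : volume (G ∩ D) + ENNReal.ofReal π ≤ ENNReal.ofReal π + ENNReal.ofReal π := by
      calc volume (G ∩ D) + ENNReal.ofReal π ≤ volume (G ∩ D) + volume (G' ∩ D) :=
            add_le_add_right hBge _
        _ = _ := hsum
    exact (ENNReal.add_le_add_iff_right hne).1 (by rwa [add_comm (ENNReal.ofReal π)] at h1 ⊢) 
  · refine le_antisymm ?_ hBge
    have h1 : ENNReal.ofReal π + volume (G' ∩ D) ≤ ENNReal.ofReal π + ENNReal.ofReal π := by
      calc ENNReal.ofReal π + volume (G' ∩ D) ≤ volume (G ∩ D) + volume (G' ∩ D) :=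
            add_le_add_left hAge _
        _ = _ := hsum
    exact (ENNReal.add_le_add_iff_left hne).1 h1

lemma per_shift (S : Set ℝ) (hper : ∀ v : ℝ, v ∈ S ↔ v + 2*π ∈ S) (u w : ℝ) :
    volume (S ∩ Set.Ico (u + 2*π) (w + 2*π)) = volume (S ∩ Set.Ico u w) := by
  have hset : S ∩ Set.Ico (u + 2*π) (w + 2*π)
      = (fun v : ℝ => v + -(2*π)) ⁻¹' (S ∩ Set.Ico u w) := by
    ext v
    simp only [Set.mem_inter_iff, Set.mem_preimage, Set.mem_Ico]
    have h := hper (v + -(2*π))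
    rw [show v + -(2*π) + 2*π = v by ring] at h
    constructor
    · rintro ⟨h1, h2, h3⟩
      exact ⟨h.2 h1, by linarith, by linarith⟩
    · rintro ⟨h1, h2, h3⟩
      exact ⟨h.1 h1, by linarith, by linarith⟩
  rw [hset, measure_preimage_add_right volume (-(2*π)) _]

lemma per_eq (S : Set ℝ) (hS : MeasurableSet S) (hper : ∀ v : ℝ, v ∈ S ↔ v + 2*π ∈ S)
    (s t : ℝ) (h1 : s ≤ t) (h2 : t ≤ s + 2*π) :
    volume (S ∩ Set.Ico t (t + 2*π)) = volume (S ∩ Set.Ico s (s + 2*π)) := by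
  have hπ := pi_pos
  have hL : S ∩ Set.Ico t (t + 2*π)
      = (S ∩ Set.Ico t (s + 2*π)) ∪ (S ∩ Set.Ico (s + 2*π) (t + 2*π)) := by
    rw [← Set.inter_union_distrib_left, Set.Ico_union_Ico_eq_Ico h2 (by linarith)]
  have hR : S ∩ Set.Ico s (s + 2*π)
      = (S ∩ Set.Ico s t) ∪ (S ∩ Set.Ico t (s + 2*π)) := by
    rw [← Set.inter_union_distrib_left, Set.Ico_union_Ico_eq_Ico h1 h2]
  have hshift : volume (S ∩ Set.Ico (s + 2*π) (t + 2*π)) = volume (S ∩ Set.Ico s t) :=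
    per_shift S hper s t
  have hd1 : Disjoint (S ∩ Set.Ico t (s + 2*π)) (S ∩ Set.Ico (s + 2*π) (t + 2*π)) := by
    rw [Set.disjoint_left]
    rintro v ⟨_, _, hv2⟩ ⟨_, hv3, _⟩
    linarith
  have hd2 : Disjoint (S ∩ Set.Ico s t) (S ∩ Set.Ico t (s + 2*π)) := by
    rw [Set.disjoint_left]
    rintro v ⟨_, _, hv2⟩ ⟨_, hv3, _⟩
    linarith
  rw [hL, hR, measure_union hd1 (hS.inter measurableSet_Ico),
    measure_union hd2 (hS.inter measurableSet_Ico), hshift]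
  ring

lemma per_double (S : Set ℝ) (hS : MeasurableSet S) (hper : ∀ v : ℝ, v ∈ S ↔ v + 2*π ∈ S)
    (t : ℝ) :
    volume (S ∩ Set.Ico t (t + 4*π)) = 2 * volume (S ∩ Set.Ico t (t + 2*π)) := by
  have hπ := pi_pos
  have hL : S ∩ Set.Ico t (t + 4*π)
      = (S ∩ Set.Ico t (t + 2*π)) ∪ (S ∩ Set.Ico (t + 2*π) (t + 4*π)) := by
    rw [← Set.inter_union_distrib_left, Set.Ico_union_Ico_eq_Ico (by linarith) (by linarith)]
  have hshift : volume (S ∩ Set.Ico (t + 2*π) (t + 4*π)) = volume (S ∩ Set.Ico t (t + 2*π)) := by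
    have := per_shift S hper t (t + 2*π)
    rw [show t + 2*π + 2*π = t + 4*π by ring] at this
    exact this
  have hd : Disjoint (S ∩ Set.Ico t (t + 2*π)) (S ∩ Set.Ico (t + 2*π) (t + 4*π)) := by
    rw [Set.disjoint_left]
    rintro v ⟨_, _, hv2⟩ ⟨_, hv3, _⟩
    linarith
  rw [hL, measure_union hd (hS.inter measurableSet_Ico), hshift]
  ring

lemma volPre (G : Set ℝ) (hGm : MeasurableSet G) (hper : ∀ v : ℝ, v ∈ G ↔ v + 2*π ∈ G)
    (x s : ℝ) (hx0 : 0 ≤ x) (hx2 : x < 2*π) (hs1 : -(π/2) ≤ s) (hs2 : s ≤ π/2)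
    (hcore : volume (G ∩ Set.Ico s (s + 2*π)) = ENNReal.ofReal π) :
    volume ((fun y : ℝ => x/2 + 2*y) ⁻¹' (G ∩ Set.Ico (x/2) (x/2 + 4*π)))
      = ENNReal.ofReal π := by
  have hπ := pi_pos
  have hf : Measurable (fun y : ℝ => x/2 + 2*y) :=
    (measurable_const_mul 2).const_add (x/2)
  have hT : MeasurableSet (G ∩ Set.Ico (x/2) (x/2 + 4*π)) := hGm.inter measurableSet_Ico
  have hmap : Measure.map (fun y : ℝ => x/2 + 2*y) volume
      = ENNReal.ofReal |(2:ℝ)⁻¹| • volume := by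
    have hco : (fun y : ℝ => x/2 + 2*y) = (fun v : ℝ => x/2 + v) ∘ (fun y : ℝ => (2:ℝ)*y) := rfl
    rw [hco, ← Measure.map_map (measurable_const_add (x/2)) (measurable_const_mul 2),
      Real.map_volume_mul_left (two_ne_zero), Measure.map_smul, map_add_left_eq_self]
  have h1 : volume ((fun y : ℝ => x/2 + 2*y) ⁻¹' (G ∩ Set.Ico (x/2) (x/2 + 4*π)))
      = ENNReal.ofReal |(2:ℝ)⁻¹| * volume (G ∩ Set.Ico (x/2) (x/2 + 4*π)) := by
    rw [← Measure.map_apply hf hT, hmap, Measure.smul_apply, smul_eq_mul]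
  rw [h1, per_double G hGm hper (x/2)]
  have h2 : volume (G ∩ Set.Ico (x/2) (x/2 + 2*π)) = ENNReal.ofReal π := by
    rcases le_total s (x/2) with h | h
    · rw [per_eq G hGm hper s (x/2) h (by linarith), hcore]
    · rw [← per_eq G hGm hper (x/2) s h (by linarith), hcore]
  rw [h2, abs_of_pos (by norm_num : (0:ℝ) < 2⁻¹),
    ENNReal.ofReal_inv_of_pos (by norm_num : (0:ℝ) < 2), ← mul_assoc]
  rw [show ENNReal.ofReal (2:ℝ) = 2 by simp]
  rw [ENNReal.inv_mul_cancel two_ne_zero ENNReal.ofNat_ne_top, one_mul]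

lemma ident (k u y : ℝ) :
    Real.sin (2*y)^2 - (Real.sin (2*u+2*y) - k*Real.sin (2*u))^2
      = 2*Real.sin (2*u)*((k*Real.cos u - Real.cos (u+2*y))*(Real.sin (u+2*y) - k*Real.sin u)) := by
  simp only [Real.sin_add, Real.cos_add, Real.sin_two_mul, Real.cos_two_mul]
  linear_combination (-16*Real.cos u^2*Real.sin y^2*Real.cos y^2 + 8*Real.sin u*Real.cos u*Real.sin y*Real.cos y + 8*Real.sin u*Real.cos u*Real.sin y*Real.cos y*k + -16*Real.sin u*Real.cos u*Real.sin y*Real.cos y^3) * (Real.sin_sq_add_cos_sq u)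

lemma slice14 (c x : ℝ) (hc : c^2 ≤ 1) (hx0 : 0 ≤ x) (hx2 : x < 2*π) (hs : Real.sin x ≠ 0) :
    volume {y : ℝ | y ∈ Set.Ico (0:ℝ) (2*π) ∧
      0 ≤ Real.sin (2*y)^2 - (Real.sin (x+2*y) - c*Real.sin x)^2} = ENNReal.ofReal π := by
  have hπ := pi_pos
  set a : ℝ := c * Real.cos (x/2) with hadef
  set b : ℝ := c * Real.sin (x/2) with hbdef
  have hab : a^2 + b^2 ≤ 1 := by
    have h : a^2 + b^2 = c^2 * (Real.sin (x/2)^2 + Real.cos (x/2)^2) := by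
      rw [hadef, hbdef]; ring
    rw [Real.sin_sq_add_cos_sq, mul_one] at h
    linarith
  have hβ := Real.arcsin_mem_Icc b
  have hid : ∀ y : ℝ, Real.sin (2*y)^2 - (Real.sin (x+2*y) - c*Real.sin x)^2
      = 2*Real.sin x*((a - Real.cos (x/2+2*y))*(Real.sin (x/2+2*y) - b)) := by
    intro y
    have h := ident c (x/2) y
    rw [show 2*(x/2) = x by ring] at h
    exact h
  rcases hs.lt_or_gt with hneg | hpos
  · -- sin x < 0
    set G : Set ℝ := {v : ℝ | (a - Real.cos v) * (Real.sin v - b) ≤ 0} with hGdef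
    have hGm : MeasurableSet G :=
      (isClosed_le ((continuous_const.sub Real.continuous_cos).mul
          (Real.continuous_sin.sub continuous_const)) continuous_const).measurableSet
    have hper : ∀ v : ℝ, v ∈ G ↔ v + 2*π ∈ G := by
      intro v
      simp only [hGdef, Set.mem_setOf_eq, Real.cos_add_two_pi, Real.sin_add_two_pi]
    have hiff : ∀ t : ℝ, (0 ≤ 2*Real.sin x*t) ↔ t ≤ 0 := by
      intro t
      constructor <;> intro h <;> nlinarith
    have hset : {y : ℝ | y ∈ Set.Ico (0:ℝ) (2*π) ∧
        0 ≤ Real.sin (2*y)^2 - (Real.sin (x+2*y) - c*Real.sin x)^2}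
        = (fun y : ℝ => x/2 + 2*y) ⁻¹' (G ∩ Set.Ico (x/2) (x/2 + 4*π)) := by
      ext y
      simp only [Set.mem_setOf_eq, Set.mem_preimage, Set.mem_inter_iff, Set.mem_Ico]
      rw [hid y]
      constructor
      · rintro ⟨⟨h1, h2⟩, h3⟩
        exact ⟨(hiff _).1 h3, by linarith, by linarith⟩
      · rintro ⟨h1, h2, h3⟩
        exact ⟨⟨by linarith, by linarith⟩, (hiff _).2 h1⟩
    rw [hset]
    exact volPre G hGm hper x (Real.arcsin b) hx0 hx2 hβ.1 hβ.2 (core a b hab).2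
  · -- sin x > 0
    set G : Set ℝ := {v : ℝ | 0 ≤ (a - Real.cos v) * (Real.sin v - b)} with hGdef
    have hGm : MeasurableSet G :=
      (isClosed_le continuous_const ((continuous_const.sub Real.continuous_cos).mul
          (Real.continuous_sin.sub continuous_const))).measurableSet
    have hper : ∀ v : ℝ, v ∈ G ↔ v + 2*π ∈ G := by
      intro v
      simp only [hGdef, Set.mem_setOf_eq, Real.cos_add_two_pi, Real.sin_add_two_pi]
    have hiff : ∀ t : ℝ, (0 ≤ 2*Real.sin x*t) ↔ 0 ≤ t := by
      intro t
      constructor <;> intro h <;> nlinarith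
    have hset : {y : ℝ | y ∈ Set.Ico (0:ℝ) (2*π) ∧
        0 ≤ Real.sin (2*y)^2 - (Real.sin (x+2*y) - c*Real.sin x)^2}
        = (fun y : ℝ => x/2 + 2*y) ⁻¹' (G ∩ Set.Ico (x/2) (x/2 + 4*π)) := by
      ext y
      simp only [Set.mem_setOf_eq, Set.mem_preimage, Set.mem_inter_iff, Set.mem_Ico]
      rw [hid y]
      constructor
      · rintro ⟨⟨h1, h2⟩, h3⟩
        exact ⟨(hiff _).1 h3, by linarith, by linarith⟩
      · rintro ⟨h1, h2, h3⟩
        exact ⟨⟨by linarith, by linarith⟩, (hiff _).2 h1⟩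
    rw [hset]
    exact volPre G hGm hper x (Real.arcsin b) hx0 hx2 hβ.1 hβ.2 (core a b hab).1

theorem stmt_14 (A : ℝ) :
    volume {p : ℝ × ℝ | p.1 ∈ Set.Ico (0 : ℝ) (2 * π) ∧ p.2 ∈ Set.Ico (0 : ℝ) (2 * π) ∧
        0 ≤ Real.sin (2 * p.2) ^ 2
          - (Real.sin (p.1 + 2 * p.2) - Real.cos (2 * A * π) * Real.sin p.1) ^ 2}
      = ENNReal.ofReal (2 * π ^ 2) := by
  have hπ := pi_pos
  set c : ℝ := Real.cos (2 * A * π) with hcdef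
  have hc : c^2 ≤ 1 := Real.cos_sq_le_one (2*A*π)
  have hcont : Continuous fun p : ℝ × ℝ =>
      Real.sin (2 * p.2) ^ 2 - (Real.sin (p.1 + 2 * p.2) - c * Real.sin p.1) ^ 2 := by
    fun_prop
  have hSm : MeasurableSet {p : ℝ × ℝ | p.1 ∈ Set.Ico (0 : ℝ) (2 * π) ∧
      p.2 ∈ Set.Ico (0 : ℝ) (2 * π) ∧
      0 ≤ Real.sin (2 * p.2) ^ 2 - (Real.sin (p.1 + 2 * p.2) - c * Real.sin p.1) ^ 2} := by
    have heq : {p : ℝ × ℝ | p.1 ∈ Set.Ico (0 : ℝ) (2 * π) ∧ p.2 ∈ Set.Ico (0 : ℝ) (2 * π) ∧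
        0 ≤ Real.sin (2 * p.2) ^ 2 - (Real.sin (p.1 + 2 * p.2) - c * Real.sin p.1) ^ 2}
        = (Set.Ico (0:ℝ) (2*π) ×ˢ Set.Ico (0:ℝ) (2*π)) ∩
          {p : ℝ × ℝ | 0 ≤ Real.sin (2 * p.2) ^ 2
            - (Real.sin (p.1 + 2 * p.2) - c * Real.sin p.1) ^ 2} := by
      ext p
      simp only [Set.mem_setOf_eq, Set.mem_inter_iff, Set.mem_prod]
      tauto
    rw [heq]
    exact (measurableSet_Ico.prod measurableSet_Ico).inter
      (isClosed_le continuous_const hcont).measurableSet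
  rw [Measure.volume_eq_prod, Measure.prod_apply hSm]
  have hslice : ∀ x : ℝ, volume (Prod.mk x ⁻¹' {p : ℝ × ℝ | p.1 ∈ Set.Ico (0 : ℝ) (2 * π) ∧
      p.2 ∈ Set.Ico (0 : ℝ) (2 * π) ∧
      0 ≤ Real.sin (2 * p.2) ^ 2 - (Real.sin (p.1 + 2 * p.2) - c * Real.sin p.1) ^ 2})
      = Set.indicator (Set.Ico (0:ℝ) (2*π)) (fun x => volume {y : ℝ | y ∈ Set.Ico (0:ℝ) (2*π) ∧
          0 ≤ Real.sin (2*y)^2 - (Real.sin (x+2*y) - c*Real.sin x)^2}) x := by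
    intro x
    by_cases hx : x ∈ Set.Ico (0:ℝ) (2*π)
    · rw [Set.indicator_of_mem hx]
      congr 1
      ext y
      simp only [Set.mem_preimage, Set.mem_setOf_eq]
      tauto
    · rw [Set.indicator_of_notMem hx]
      have hempty : Prod.mk x ⁻¹' {p : ℝ × ℝ | p.1 ∈ Set.Ico (0 : ℝ) (2 * π) ∧
          p.2 ∈ Set.Ico (0 : ℝ) (2 * π) ∧
          0 ≤ Real.sin (2 * p.2) ^ 2 - (Real.sin (p.1 + 2 * p.2) - c * Real.sin p.1) ^ 2}
          = (∅ : Set ℝ) := by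
        ext y
        simp only [Set.mem_preimage, Set.mem_setOf_eq, Set.mem_empty_iff_false, iff_false]
        tauto
      rw [hempty, measure_empty]
  rw [lintegral_congr hslice, lintegral_indicator measurableSet_Ico]
  have h0 : volume ({0, π} : Set ℝ) = 0 :=
    (((Set.countable_singleton π).insert 0).measure_zero _)
  have hae : ∀ᵐ x : ℝ, x ∈ Set.Ico (0:ℝ) (2*π) →
      volume {y : ℝ | y ∈ Set.Ico (0:ℝ) (2*π) ∧
        0 ≤ Real.sin (2*y)^2 - (Real.sin (x+2*y) - c*Real.sin x)^2} = ENNReal.ofReal π := by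
    filter_upwards [measure_eq_zero_iff_ae_notMem.mp h0] with x hx hxIco
    refine slice14 c x hc hxIco.1 hxIco.2 ?_
    intro hsin
    rw [Real.sin_eq_zero_iff] at hsin
    obtain ⟨n, hn⟩ := hsin
    have hn0 : (0:ℤ) ≤ n := by
      by_contra h
      push_neg at h
      have h1' : n ≤ -1 := by omega
      have h1 : (n:ℝ) ≤ -1 := by exact_mod_cast h1'
      have := hxIco.1
      nlinarith
    have hn2 : n < 2 := by
      by_contra h
      push_neg at h
      have h1 : (2:ℝ) ≤ (n:ℝ) := by exact_mod_cast h
      have := hxIco.2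
      nlinarith
    interval_cases n
    · apply hx
      push_cast at hn
      simp [← hn]
    · apply hx
      push_cast at hn
      simp [← hn]
  rw [setLIntegral_congr_fun_ae measurableSet_Ico hae, setLIntegral_const, Real.volume_Ico,
    ← ENNReal.ofReal_mul hπ.le]
  congr 1
  ring
end

section
/- For all ℓ > 0 and all A ∈ ℝ, the negative-spectrum band condition of the symmetric tightly coupled chain holds at κ = ℓ⁻¹: namely, |2(1−κ²ℓ²)·sinh(κπ)·cos(Aπ) + 4κℓ·sin(Aπ)·cosh(κπ)| ≥ |2κℓ·sin(2Aπ) + (1−κ²ℓ²)·sinh(2κπ)| holds with κ = ℓ⁻¹ (where it reduces to cosh(π/ℓ) ≥ |cos(Aπ)|); hence the energy −ℓ⁻² always belongs to the negative spectral band. -/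
open Real

theorem stmt_16 (ℓ : ℝ) (hℓ : 0 < ℓ) (A : ℝ) (κ : ℝ) (hκ : κ = ℓ⁻¹) :
    |2 * (1 - κ ^ 2 * ℓ ^ 2) * Real.sinh (κ * π) * Real.cos (A * π)
        + 4 * κ * ℓ * Real.sin (A * π) * Real.cosh (κ * π)|
      ≥ |2 * κ * ℓ * Real.sin (2 * A * π) + (1 - κ ^ 2 * ℓ ^ 2) * Real.sinh (2 * κ * π)| := by
  have hkl : κ * ℓ = 1 := by
    rw [hκ]; field_simp
  have hk2 : κ ^ 2 * ℓ ^ 2 = 1 := by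
    have : (κ * ℓ) ^ 2 = 1 := by rw [hkl]; ring
    linarith [sq_nonneg (κ * ℓ), this, (by ring : (κ * ℓ) ^ 2 = κ ^ 2 * ℓ ^ 2)]
  have h2 : (2 : ℝ) * A * π = 2 * (A * π) := by ring
  rw [hk2, h2, Real.sin_two_mul]
  have key : |2 * κ * ℓ * (2 * Real.sin (A * π) * Real.cos (A * π)) + (1 - 1) * Real.sinh (2 * κ * π)|
      = 4 * |Real.sin (A * π)| * |Real.cos (A * π)| := by
    have : 2 * κ * ℓ * (2 * Real.sin (A * π) * Real.cos (A * π)) + (1 - 1) * Real.sinh (2 * κ * π)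
        = 4 * (Real.sin (A * π) * Real.cos (A * π)) := by
      linear_combination (4 * Real.sin (A * π) * Real.cos (A * π)) * hkl
    rw [this, abs_mul, abs_mul]
    norm_num [mul_assoc]
  have key2 : |2 * (1 - 1) * Real.sinh (κ * π) * Real.cos (A * π)
      + 4 * κ * ℓ * Real.sin (A * π) * Real.cosh (κ * π)|
      = 4 * |Real.sin (A * π)| * Real.cosh (κ * π) := by
    have h : 2 * (1 - 1) * Real.sinh (κ * π) * Real.cos (A * π)
        + 4 * κ * ℓ * Real.sin (A * π) * Real.cosh (κ * π)
        = 4 * (Real.sin (A * π) * Real.cosh (κ * π)) := by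
      linear_combination (4 * Real.sin (A * π) * Real.cosh (κ * π)) * hkl
    rw [h, abs_mul, abs_mul, abs_of_pos (Real.cosh_pos (κ * π))]
    norm_num [mul_assoc]
  rw [key, key2]
  have hc : |Real.cos (A * π)| ≤ Real.cosh (κ * π) :=
    le_trans (Real.abs_cos_le_one _) (Real.one_le_cosh _)
  have hs : (0 : ℝ) ≤ 4 * |Real.sin (A * π)| := by positivity
  nlinarith [abs_nonneg (Real.sin (A * π))]
end

section
/- Suppose A is an integer and ℓ > 0. Then for κ > 0 the negative-spectrum band condition of the symmetric tightly coupled chain, |2(1−κ²ℓ²)·sinh(κπ)·cos(Aπ) + 4κℓ·sin(Aπ)·cosh(κπ)| ≥ |2κℓ·sin(2Aπ) + (1−κ²ℓ²)·sinh(2κπ)|, holds if and only if κ = ℓ⁻¹; i.e., for integer flux the negative band shrinks to the single point −ℓ⁻². -/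
open Real

theorem stmt_17 (A : ℝ) (hA : ∃ m : ℤ, A = m) (ℓ : ℝ) (hℓ : 0 < ℓ)
    (κ : ℝ) (hκ : 0 < κ) :
    (|2 * (1 - κ ^ 2 * ℓ ^ 2) * Real.sinh (κ * π) * Real.cos (A * π)
        + 4 * κ * ℓ * Real.sin (A * π) * Real.cosh (κ * π)|
      ≥ |2 * κ * ℓ * Real.sin (2 * A * π) + (1 - κ ^ 2 * ℓ ^ 2) * Real.sinh (2 * κ * π)|)
    ↔ κ = ℓ⁻¹ := by
  obtain ⟨m, rfl⟩ := hA
  have hs : Real.sin ((m : ℝ) * π) = 0 := Real.sin_int_mul_pi m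
  have hs2 : Real.sin (2 * (m : ℝ) * π) = 0 := by
    have h := Real.sin_int_mul_pi (2 * m)
    push_cast at h
    rw [show 2 * (m : ℝ) * π = (2 : ℝ) * (m : ℝ) * π by ring]
    exact h
  have hcos : |Real.cos ((m : ℝ) * π)| = 1 := by
    have h := Real.sin_sq_add_cos_sq ((m : ℝ) * π)
    rw [hs] at h
    have h1 : (|Real.cos ((m : ℝ) * π)| - 1) * (|Real.cos ((m : ℝ) * π)| + 1) = 0 := by
      nlinarith [sq_abs (Real.cos ((m : ℝ) * π))]
    rcases mul_eq_zero.mp h1 with h2 | h2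
    · linarith
    · nlinarith [abs_nonneg (Real.cos ((m : ℝ) * π))]
  have hπκ : 0 < κ * π := mul_pos hκ Real.pi_pos
  have hsh : 0 < Real.sinh (κ * π) := Real.sinh_pos_iff.mpr hπκ
  have hch : 1 < Real.cosh (κ * π) := Real.one_lt_cosh.mpr (ne_of_gt hπκ)
  have hsh2 : Real.sinh (2 * κ * π) = 2 * Real.sinh (κ * π) * Real.cosh (κ * π) := by
    rw [show 2 * κ * π = 2 * (κ * π) by ring, Real.sinh_two_mul]
  rw [hs, hs2, hsh2]
  have hL : |2 * (1 - κ ^ 2 * ℓ ^ 2) * Real.sinh (κ * π) * Real.cos ((m : ℝ) * π)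
      + 4 * κ * ℓ * 0 * Real.cosh (κ * π)|
      = 2 * |1 - κ ^ 2 * ℓ ^ 2| * Real.sinh (κ * π) := by
    rw [show 2 * (1 - κ ^ 2 * ℓ ^ 2) * Real.sinh (κ * π) * Real.cos ((m : ℝ) * π)
      + 4 * κ * ℓ * 0 * Real.cosh (κ * π)
      = (2 * (1 - κ ^ 2 * ℓ ^ 2) * Real.sinh (κ * π)) * Real.cos ((m : ℝ) * π) by ring,
      abs_mul, hcos, mul_one, abs_mul, abs_mul, abs_of_pos hsh]
    norm_num
  have hR : |2 * κ * ℓ * 0 + (1 - κ ^ 2 * ℓ ^ 2) * (2 * Real.sinh (κ * π) * Real.cosh (κ * π))|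
      = 2 * |1 - κ ^ 2 * ℓ ^ 2| * Real.sinh (κ * π) * Real.cosh (κ * π) := by
    rw [show 2 * κ * ℓ * 0 + (1 - κ ^ 2 * ℓ ^ 2) * (2 * Real.sinh (κ * π) * Real.cosh (κ * π))
      = (1 - κ ^ 2 * ℓ ^ 2) * (2 * Real.sinh (κ * π) * Real.cosh (κ * π)) by ring, abs_mul]
    rw [abs_of_pos (by positivity : (0:ℝ) < 2 * Real.sinh (κ * π) * Real.cosh (κ * π))]
    ring
  rw [hL, hR]
  constructor
  · intro h
    have hc : |1 - κ ^ 2 * ℓ ^ 2| = 0 := by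
      by_contra hne
      have hpos : 0 < |1 - κ ^ 2 * ℓ ^ 2| :=
        lt_of_le_of_ne (abs_nonneg _) (Ne.symm hne)
      nlinarith [mul_pos (mul_pos hpos hsh) (sub_pos.mpr hch)]
    have hc0 : 1 - κ ^ 2 * ℓ ^ 2 = 0 := abs_eq_zero.mp hc
    have hkl : κ * ℓ = 1 := by
      have h1 : (κ * ℓ - 1) * (κ * ℓ + 1) = 0 := by nlinarith
      rcases mul_eq_zero.mp h1 with h2 | h2
      · linarith
      · nlinarith [mul_pos hκ hℓ]
    field_simp
    linarith [hkl]
  · intro h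
    subst h
    have : 1 - ℓ⁻¹ ^ 2 * ℓ ^ 2 = 0 := by
      field_simp
      norm_num
    rw [this]
    simp
end

section
/- For all real A, k and all ℓ₃ ∈ ℝ, the following trigonometric identity holds: sin²((A+k)π) + sin²((A−k)π) − 2·sin((A+k)π)·sin((A−k)π)·cos(2k(π−ℓ₃)) − sin²(2kπ) = 4·sin((k−A)π)·sin((k+A)π)·sin(kℓ₃)·sin(k(2π−ℓ₃)). -/
open Real

theorem stmt_18 (A k ℓ₃ : ℝ) :
    Real.sin ((A + k) * π) ^ 2 + Real.sin ((A - k) * π) ^ 2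
      - 2 * Real.sin ((A + k) * π) * Real.sin ((A - k) * π) * Real.cos (2 * k * (π - ℓ₃))
      - Real.sin (2 * k * π) ^ 2
    = 4 * Real.sin ((k - A) * π) * Real.sin ((k + A) * π) * Real.sin (k * ℓ₃)
        * Real.sin (k * (2 * π - ℓ₃)) := by
  have h1 : (A + k) * π = A * π + k * π := by ring
  have h2 : (A - k) * π = A * π - k * π := by ring
  have h3 : (k - A) * π = k * π - A * π := by ring
  have h4 : (k + A) * π = k * π + A * π := by ring
  have h5 : 2 * k * (π - ℓ₃) = (k * π + k * π) - (k * ℓ₃ + k * ℓ₃) := by ring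
  have h6 : 2 * k * π = k * π + k * π := by ring
  have h7 : k * (2 * π - ℓ₃) = (k * π + k * π) - k * ℓ₃ := by ring
  rw [h1, h2, h3, h4, h5, h6, h7]
  simp only [Real.sin_add, Real.sin_sub, Real.cos_sub, Real.cos_add, Real.sin_add]
  set sa := Real.sin (A * π)
  set ca := Real.cos (A * π)
  set sk := Real.sin (k * π)
  set ck := Real.cos (k * π)
  set sl := Real.sin (k * ℓ₃)
  set cl := Real.cos (k * ℓ₃)
  have p1 : sa ^ 2 + ca ^ 2 = 1 := Real.sin_sq_add_cos_sq (A * π)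
  have p2 : sk ^ 2 + ck ^ 2 = 1 := Real.sin_sq_add_cos_sq (k * π)
  have p3 : sl ^ 2 + cl ^ 2 = 1 := Real.sin_sq_add_cos_sq (k * ℓ₃)
  linear_combination
      (2*ck^2 - 2*ck^4*cl^2 - 2*ck^4*sl^2 + 2*sk^2*ck^2*cl^2 + 2*sk^2*ck^2*sl^2) * p1
    + (-4*ck^2 + 2*ck^2*cl^2 + 2*ck^2*sl^2 + 2*ca^2 - 2*ca^2*cl^2 - 2*ca^2*sl^2
        + 2*ca^2*ck^2*cl^2 + 2*ca^2*ck^2*sl^2 - 2*ca^2*sk^2*cl^2 - 2*ca^2*sk^2*sl^2) * p2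
    + (2*ck^2 - 4*ck^4 - 2*ca^2 + 4*ca^2*ck^2) * p3
end
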